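/- arXiv:1910.11420 — 5 statements merged into one kernel-verified Lean document; each statement's English description precedes it below -/
import Mathlib

section
/- Let v be an integrable function on [0,∞) satisfying m ≤ v(x) ≤ M for all x ∈ [0,∞), where m, M ∈ ℝ. Then for all x > 0, α > 0, δ > 0, ρ > 0 and β, λ, η, k ∈ ℝ with η > −1, one has M · Λ_{x,k}^{ρ,β}(α,η) · ρJ_{η,k}^{δ,λ} v(x) + m · Λ_{x,k}^{ρ,λ}(δ,η) · ρJ_{η,k}^{α,β} v(x) ≥ ρJ_{η,k}^{α,β} v(x) · ρJ_{η,k}^{δ,λ} v(x) + m·M · Λ_{x,k}^{ρ,β}(α,η) · Λ_{x,k}^{ρ,λ}(δ,η). -/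
open MeasureTheory Real Set


lemma beta_cpow_eq (a b : ℝ) : ∀ s ∈ Icc (0:ℝ) 1,
    (s:ℂ) ^ ((a:ℂ) - 1) * (1 - (s:ℂ)) ^ ((b:ℂ) - 1)
      = ((s ^ (a-1) * (1-s) ^ (b-1) : ℝ) : ℂ) := by
  intro s hs
  rw [show ((a:ℂ) - 1) = ((a - 1 : ℝ) : ℂ) by push_cast; ring,
    show ((b:ℂ) - 1) = ((b - 1 : ℝ) : ℂ) by push_cast; ring,
    show (1 - (s:ℂ)) = ((1 - s : ℝ) : ℂ) by push_cast; ring,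
    ← Complex.ofReal_cpow hs.1, ← Complex.ofReal_cpow (by linarith [hs.2]),
    ← Complex.ofReal_mul]

lemma beta_integrable {a b : ℝ} (ha : 0 < a) (hb : 0 < b) :
    IntegrableOn (fun s => s ^ (a-1) * (1-s) ^ (b-1)) (Ioc (0:ℝ) 1) := by
  have hc : IntervalIntegrable (fun s : ℝ => (s:ℂ) ^ ((a:ℂ) - 1) * (1 - (s:ℂ)) ^ ((b:ℂ) - 1))
      volume 0 1 := Complex.betaIntegral_convergent (by simpa using ha) (by simpa using hb)
  have hc' : IntegrableOn (fun s : ℝ => (s:ℂ) ^ ((a:ℂ) - 1) * (1 - (s:ℂ)) ^ ((b:ℂ) - 1))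
      (Ioc (0:ℝ) 1) := (intervalIntegrable_iff_integrableOn_Ioc_of_le (by norm_num)).mp hc
  have h2 : IntegrableOn (fun s : ℝ => ((s:ℂ) ^ ((a:ℂ) - 1) * (1 - (s:ℂ)) ^ ((b:ℂ) - 1)).re)
      (Ioc (0:ℝ) 1) := hc'.re
  refine IntegrableOn.congr_fun h2 (fun s hs => ?_) measurableSet_Ioc
  rw [beta_cpow_eq a b s (Ioc_subset_Icc_self hs), Complex.ofReal_re]

lemma beta_value {a b : ℝ} (ha : 0 < a) (hb : 0 < b) :
    ∫ s in Ioc (0:ℝ) 1, s ^ (a-1) * (1-s) ^ (b-1)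
      = Real.Gamma a * Real.Gamma b / Real.Gamma (a + b) := by
  have key : Complex.Gamma a * Complex.Gamma b
      = Complex.Gamma ((a:ℂ) + b) * Complex.betaIntegral a b :=
    Complex.Gamma_mul_Gamma_eq_betaIntegral (by simpa using ha) (by simpa using hb)
  have hbeta : Complex.betaIntegral a b = ((∫ s in (0:ℝ)..1, s ^ (a-1) * (1-s) ^ (b-1) : ℝ) : ℂ) := by
    rw [Complex.betaIntegral, ← intervalIntegral.integral_ofReal]
    refine intervalIntegral.integral_congr (fun s hs => ?_)
    rw [uIcc_of_le (by norm_num : (0:ℝ) ≤ 1)] at hs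
    exact beta_cpow_eq a b s hs
  rw [hbeta, show ((a:ℂ) + b) = ((a + b : ℝ) : ℂ) by push_cast; ring,
    Complex.Gamma_ofReal, Complex.Gamma_ofReal, Complex.Gamma_ofReal,
    ← Complex.ofReal_mul, ← Complex.ofReal_mul] at key
  have key' : Real.Gamma a * Real.Gamma b
      = Real.Gamma (a + b) * ∫ s in (0:ℝ)..1, s ^ (a-1) * (1-s) ^ (b-1) :=
    Complex.ofReal_injective key
  have hG : Real.Gamma (a + b) ≠ 0 := (Real.Gamma_pos_of_pos (by linarith)).ne'
  rw [← intervalIntegral.integral_of_le (by norm_num : (0:ℝ) ≤ 1)]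
  field_simp [key']
  rw [key']; ring

lemma scaled_integrable {a b c : ℝ} (ha : 0 < a) (hb : 0 < b) (hc : 0 < c) :
    IntegrableOn (fun s => s ^ (a-1) * (c-s) ^ (b-1)) (Ioc (0:ℝ) c) := by
  have h1 : IntervalIntegrable (fun u => u ^ (a-1) * (1-u) ^ (b-1)) volume 0 1 :=
    (intervalIntegrable_iff_integrableOn_Ioc_of_le (by norm_num)).mpr (beta_integrable ha hb)
  have h2 := (h1.comp_mul_left (c := c⁻¹)).const_mul (c ^ (a-1) * c ^ (b-1))
  rw [show (0:ℝ)/c⁻¹ = 0 by simp, show (1:ℝ)/c⁻¹ = c by field_simp] at h2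
  have h2' : IntegrableOn
      (fun s => c ^ (a-1) * c ^ (b-1) * ((c⁻¹ * s) ^ (a-1) * (1 - c⁻¹ * s) ^ (b-1)))
      (Ioc (0:ℝ) c) :=
    (intervalIntegrable_iff_integrableOn_Ioc_of_le hc.le).mp h2
  refine h2'.congr_fun (fun s hs => ?_) measurableSet_Ioc
  have hs0 : 0 < s := hs.1
  have hsc : s ≤ c := hs.2
  have e1 : (c⁻¹ * s) ^ (a-1) = c⁻¹ ^ (a-1) * s ^ (a-1) :=
    Real.mul_rpow (by positivity) hs0.le
  have e2 : (1 - c⁻¹ * s) = c⁻¹ * (c - s) := by field_simp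
  have e3 : (c⁻¹ * (c - s)) ^ (b-1) = c⁻¹ ^ (b-1) * (c-s) ^ (b-1) :=
    Real.mul_rpow (by positivity) (by linarith)
  beta_reduce
  rw [e1, e2, e3, Real.inv_rpow hc.le, Real.inv_rpow hc.le]
  have hcne : c ^ (a-1) ≠ 0 := (Real.rpow_pos_of_pos hc _).ne'
  have hcne' : c ^ (b-1) ≠ 0 := (Real.rpow_pos_of_pos hc _).ne'
  field_simp

lemma scaled_value {a b c : ℝ} (ha : 0 < a) (hb : 0 < b) (hc : 0 < c) :
    ∫ s in Ioc (0:ℝ) c, s ^ (a-1) * (c-s) ^ (b-1)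
      = c ^ (a+b-1) * (Real.Gamma a * Real.Gamma b / Real.Gamma (a + b)) := by
  have key : ∫ u in (0:ℝ)..1, (fun s => s ^ (a-1) * (c-s) ^ (b-1)) (c * u)
      = c⁻¹ • ∫ s in (c*0:ℝ)..(c*1), s ^ (a-1) * (c-s) ^ (b-1) :=
    intervalIntegral.integral_comp_mul_left (fun s => s ^ (a-1) * (c-s) ^ (b-1)) hc.ne'
  have congr1 : ∫ u in (0:ℝ)..1, (fun s => s ^ (a-1) * (c-s) ^ (b-1)) (c * u)
      = ∫ u in (0:ℝ)..1, c ^ (a-1) * c ^ (b-1) * (u ^ (a-1) * (1-u) ^ (b-1)) := by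
    refine intervalIntegral.integral_congr (fun u hu => ?_)
    rw [uIcc_of_le (by norm_num : (0:ℝ) ≤ 1)] at hu
    have e1 : (c * u) ^ (a-1) = c ^ (a-1) * u ^ (a-1) := Real.mul_rpow hc.le hu.1
    have e2 : (c - c * u) = c * (1 - u) := by ring
    have e3 : (c * (1-u)) ^ (b-1) = c ^ (b-1) * (1-u) ^ (b-1) :=
      Real.mul_rpow hc.le (by linarith [hu.2])
    simp only [e1, e2, e3]; ring
  rw [congr1, intervalIntegral.integral_const_mul,
    intervalIntegral.integral_of_le (by norm_num : (0:ℝ) ≤ 1), beta_value ha hb] at key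
  have : ∫ s in (c*0:ℝ)..(c*1), s ^ (a-1) * (c-s) ^ (b-1)
      = ∫ s in Ioc (0:ℝ) c, s ^ (a-1) * (c-s) ^ (b-1) := by
    rw [mul_zero, mul_one, intervalIntegral.integral_of_le hc.le]
  rw [this] at key
  have hB : c * (c ^ (a-1) * c ^ (b-1) * (Real.Gamma a * Real.Gamma b / Real.Gamma (a + b)))
      = c ^ (a+b-1) * (Real.Gamma a * Real.Gamma b / Real.Gamma (a + b)) := by
    rw [show c ^ (a+b-1) = c ^ ((1:ℝ)) * c ^ (a-1) * c ^ (b-1) by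
      rw [← Real.rpow_add hc, ← Real.rpow_add hc]; ring_nf, Real.rpow_one]
    ring
  rw [smul_eq_mul] at key
  rw [← hB, key]
  field_simp

lemma kernel_pt {x ρ η α : ℝ} (hx : 0 < x) (hρ : 0 < ρ) :
    ∀ τ ∈ Ioi (0:ℝ), τ ^ (ρ-1) • ((Ioc (0:ℝ) (x^ρ)).indicator
        (fun s => s ^ ((η+1)-1) * (x^ρ - s) ^ (α-1))) (τ^ρ)
      = ((Ioc (0:ℝ) x).indicator
        (fun τ => τ ^ (ρ*(η+1)-1) * (x^ρ - τ^ρ) ^ (α-1))) τ := by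
  intro τ hτ
  have hτ0 : 0 < τ := hτ
  have hmem : τ^ρ ∈ Ioc (0:ℝ) (x^ρ) ↔ τ ∈ Ioc (0:ℝ) x := by
    constructor
    · rintro ⟨-, h2⟩
      exact ⟨hτ0, (Real.rpow_le_rpow_iff hτ0.le hx.le hρ).mp h2⟩
    · rintro ⟨-, h2⟩
      exact ⟨Real.rpow_pos_of_pos hτ0 ρ, Real.rpow_le_rpow hτ0.le h2 hρ.le⟩
  by_cases hin : τ ∈ Ioc (0:ℝ) x
  · rw [indicator_of_mem (hmem.mpr hin), indicator_of_mem hin, smul_eq_mul]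
    have e1 : (τ^ρ) ^ ((η+1)-1) = τ ^ (ρ*((η+1)-1)) := (Real.rpow_mul hτ0.le _ _).symm
    rw [e1, ← mul_assoc, ← Real.rpow_add hτ0]
    ring_nf
  · rw [indicator_of_notMem (fun h => hin (hmem.mp h)),
      indicator_of_notMem hin, smul_zero]

lemma kernel_integrable {x ρ η α : ℝ} (hx : 0 < x) (hρ : 0 < ρ) (hη : -1 < η) (hα : 0 < α) :
    IntegrableOn (fun τ => τ ^ (ρ*(η+1)-1) * (x^ρ - τ^ρ) ^ (α-1)) (Ioc (0:ℝ) x) := by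
  set c := x ^ ρ with hc
  have hcpos : 0 < c := Real.rpow_pos_of_pos hx ρ
  have hgi : IntegrableOn (fun s => s ^ ((η+1)-1) * (c - s) ^ (α-1)) (Ioc (0:ℝ) c) :=
    scaled_integrable (by linarith) hα hcpos
  have hgInd : IntegrableOn ((Ioc (0:ℝ) c).indicator
      (fun s => s ^ ((η+1)-1) * (c - s) ^ (α-1))) (Ioi (0:ℝ)) :=
    (hgi.integrable_indicator measurableSet_Ioc).integrableOn
  have hL := (integrableOn_Ioi_comp_rpow_iff'
      ((Ioc (0:ℝ) c).indicator (fun s => s ^ ((η+1)-1) * (c - s) ^ (α-1))) hρ.ne').mpr hgInd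
  have hKInd : IntegrableOn ((Ioc (0:ℝ) x).indicator
      (fun τ => τ ^ (ρ*(η+1)-1) * (x^ρ - τ^ρ) ^ (α-1))) (Ioi (0:ℝ)) :=
    hL.congr_fun (kernel_pt hx hρ) measurableSet_Ioi
  have h2 : Integrable ((Ioc (0:ℝ) x).indicator
      (fun τ => τ ^ (ρ*(η+1)-1) * (x^ρ - τ^ρ) ^ (α-1)))
      (volume.restrict (Ioi (0:ℝ))) := hKInd
  rw [integrable_indicator_iff measurableSet_Ioc] at h2
  have : (volume.restrict (Ioi (0:ℝ))).restrict (Ioc (0:ℝ) x) = volume.restrict (Ioc (0:ℝ) x) := by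
    rw [Measure.restrict_restrict measurableSet_Ioc, Ioc_inter_Ioi]
    norm_num
  rw [IntegrableOn, this] at h2
  exact h2

lemma kernel_value {x ρ η α : ℝ} (hx : 0 < x) (hρ : 0 < ρ) (hη : -1 < η) (hα : 0 < α) :
    ∫ τ in Ioc (0:ℝ) x, τ ^ (ρ*(η+1)-1) * (x^ρ - τ^ρ) ^ (α-1)
      = x ^ (ρ*(η+α)) / ρ * (Real.Gamma (η+1) * Real.Gamma α / Real.Gamma (η+α+1)) := by
  have hcpos : 0 < x^ρ := Real.rpow_pos_of_pos hx ρ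
  set g := (Ioc (0:ℝ) (x^ρ)).indicator (fun s => s ^ ((η+1)-1) * ((x^ρ) - s) ^ (α-1)) with hg
  have key : ∫ τ in Ioi (0:ℝ), (ρ * τ ^ (ρ-1)) • g (τ^ρ) = ∫ s in Ioi (0:ℝ), g s :=
    integral_comp_rpow_Ioi_of_pos hρ
  have lhs1 : ∫ τ in Ioi (0:ℝ), (ρ * τ ^ (ρ-1)) • g (τ^ρ)
      = ρ * ∫ τ in Ioi (0:ℝ), τ ^ (ρ-1) • g (τ^ρ) := by
    simp_rw [mul_smul, smul_eq_mul]
    rw [integral_const_mul]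
  have lhs2 : ∫ τ in Ioi (0:ℝ), τ ^ (ρ-1) • g (τ^ρ)
      = ∫ τ in Ioi (0:ℝ), ((Ioc (0:ℝ) x).indicator
          (fun τ => τ ^ (ρ*(η+1)-1) * (x^ρ - τ^ρ) ^ (α-1))) τ :=
    setIntegral_congr_fun measurableSet_Ioi (kernel_pt hx hρ)
  have lhs3 : ∫ τ in Ioi (0:ℝ), ((Ioc (0:ℝ) x).indicator
          (fun τ => τ ^ (ρ*(η+1)-1) * (x^ρ - τ^ρ) ^ (α-1))) τ
      = ∫ τ in Ioc (0:ℝ) x, τ ^ (ρ*(η+1)-1) * (x^ρ - τ^ρ) ^ (α-1) := by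
    rw [setIntegral_indicator measurableSet_Ioc, inter_eq_self_of_subset_right Ioc_subset_Ioi_self]
  have rhs1 : ∫ s in Ioi (0:ℝ), g s = ∫ s in Ioc (0:ℝ) (x^ρ), s ^ ((η+1)-1) * ((x^ρ) - s) ^ (α-1) := by
    rw [hg, setIntegral_indicator measurableSet_Ioc, inter_eq_self_of_subset_right Ioc_subset_Ioi_self]
  have rhs2 : ∫ s in Ioc (0:ℝ) (x^ρ), s ^ ((η+1)-1) * ((x^ρ) - s) ^ (α-1)
      = (x^ρ) ^ ((η+1)+α-1) * (Real.Gamma (η+1) * Real.Gamma α / Real.Gamma ((η+1) + α)) :=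
    scaled_value (by linarith) hα hcpos
  rw [lhs1, lhs2, lhs3] at key
  rw [rhs2] at rhs1
  have hcp : (x^ρ) ^ ((η+1)+α-1) = (x^ρ) ^ (η+α) := by ring_nf
  have hxc : (x^ρ) ^ (η+α) = x ^ (ρ*(η+α)) := (Real.rpow_mul hx.le _ _).symm
  have hGam : Real.Gamma ((η+1) + α) = Real.Gamma (η+α+1) := by ring_nf
  rw [hcp, hxc, hGam] at rhs1
  rw [rhs1] at key
  rw [div_mul_eq_mul_div, eq_comm, div_eq_iff hρ.ne']
  linarith [key]

lemma Kv_integrable {v : ℝ → ℝ} {m M x ρ η α : ℝ}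
    (hv : IntegrableOn v (Ici (0:ℝ)))
    (hbound : ∀ t ∈ Ici (0:ℝ), m ≤ v t ∧ v t ≤ M)
    (hx : 0 < x) (hρ : 0 < ρ) (hη : -1 < η) (hα : 0 < α) :
    IntegrableOn (fun τ => τ ^ (ρ*(η+1)-1) * (x^ρ - τ^ρ) ^ (α-1) * v τ) (Ioc (0:ℝ) x) := by
  set C := max |m| |M| with hC
  have hK := kernel_integrable hx hρ hη hα
  have hKm : Measurable (fun τ : ℝ => τ ^ (ρ*(η+1)-1) * (x^ρ - τ^ρ) ^ (α-1)) := by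
    fun_prop
  have hsub : Ioc (0:ℝ) x ⊆ Ici (0:ℝ) := fun t ht => le_of_lt ht.1
  have hvm : AEStronglyMeasurable v (volume.restrict (Ioc (0:ℝ) x)) :=
    hv.aestronglyMeasurable.mono_measure (Measure.restrict_mono hsub le_rfl)
  refine Integrable.mono (hK.const_mul C) (hKm.aestronglyMeasurable.mul hvm)
    (ae_restrict_of_forall_mem measurableSet_Ioc fun τ hτ => ?_)
  have hτ0 : 0 < τ := hτ.1
  have hKpos : 0 ≤ τ ^ (ρ*(η+1)-1) * (x^ρ - τ^ρ) ^ (α-1) := by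
    apply mul_nonneg (Real.rpow_nonneg hτ0.le _) (Real.rpow_nonneg ?_ _)
    have := Real.rpow_le_rpow hτ0.le hτ.2 hρ.le
    linarith
  have hvC : |v τ| ≤ C := by
    rcases hbound τ (hsub hτ) with ⟨h1, h2⟩
    rw [abs_le]
    constructor
    · calc -C ≤ -|m| := by simp [hC]
        _ ≤ m := neg_abs_le m
        _ ≤ v τ := h1
    · calc v τ ≤ M := h2
        _ ≤ |M| := le_abs_self M
        _ ≤ C := le_max_right _ _
  have hC0 : 0 ≤ C := le_trans (abs_nonneg m) (le_max_left _ _)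
  rw [Real.norm_eq_abs, Real.norm_eq_abs, abs_mul, abs_of_nonneg hKpos, abs_mul,
    abs_of_nonneg hC0, abs_of_nonneg hKpos]
  calc τ ^ (ρ*(η+1)-1) * (x^ρ - τ^ρ) ^ (α-1) * |v τ|
      ≤ τ ^ (ρ*(η+1)-1) * (x^ρ - τ^ρ) ^ (α-1) * C := by
        exact mul_le_mul_of_nonneg_left hvC hKpos
    _ = C * (τ ^ (ρ*(η+1)-1) * (x^ρ - τ^ρ) ^ (α-1)) := by ring

lemma Kv_bounds {v : ℝ → ℝ} {m M x ρ η α : ℝ}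
    (hv : IntegrableOn v (Ici (0:ℝ)))
    (hbound : ∀ t ∈ Ici (0:ℝ), m ≤ v t ∧ v t ≤ M)
    (hx : 0 < x) (hρ : 0 < ρ) (hη : -1 < η) (hα : 0 < α) :
    m * (∫ τ in Ioc (0:ℝ) x, τ ^ (ρ*(η+1)-1) * (x^ρ - τ^ρ) ^ (α-1))
      ≤ (∫ τ in Ioc (0:ℝ) x, τ ^ (ρ*(η+1)-1) * (x^ρ - τ^ρ) ^ (α-1) * v τ) ∧
    (∫ τ in Ioc (0:ℝ) x, τ ^ (ρ*(η+1)-1) * (x^ρ - τ^ρ) ^ (α-1) * v τ)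
      ≤ M * (∫ τ in Ioc (0:ℝ) x, τ ^ (ρ*(η+1)-1) * (x^ρ - τ^ρ) ^ (α-1)) := by
  have hK := kernel_integrable hx hρ hη hα
  have hKv := Kv_integrable hv hbound hx hρ hη hα
  have hsub : Ioc (0:ℝ) x ⊆ Ici (0:ℝ) := fun t ht => le_of_lt ht.1
  have hKpos : ∀ τ ∈ Ioc (0:ℝ) x, 0 ≤ τ ^ (ρ*(η+1)-1) * (x^ρ - τ^ρ) ^ (α-1) := by
    intro τ hτ
    apply mul_nonneg (Real.rpow_nonneg hτ.1.le _) (Real.rpow_nonneg ?_ _)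
    have := Real.rpow_le_rpow hτ.1.le hτ.2 hρ.le
    linarith
  constructor
  · have := setIntegral_mono_on (hK.mul_const m) hKv measurableSet_Ioc
      (fun τ hτ => by
        have := (hbound τ (hsub hτ)).1
        exact mul_le_mul_of_nonneg_left this (hKpos τ hτ))
    rwa [MeasureTheory.integral_mul_const, mul_comm] at this
  · have := setIntegral_mono_on hKv (hK.mul_const M) measurableSet_Ioc
      (fun τ hτ => by
        have := (hbound τ (hsub hτ)).2
        exact mul_le_mul_of_nonneg_left this (hKpos τ hτ))
    rw [MeasureTheory.integral_mul_const] at this; linarith [this]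



/-- Left-sided generalized Katugampola fractional integral
`ρJ_{η,k}^{α,β} v(x) = (ρ^{1−β} x^k / Γ(α)) ∫₀^x τ^{ρ(η+1)−1} (x^ρ − τ^ρ)^{α−1} v(τ) dτ`. -/
noncomputable def katJ (ρ α β η k x : ℝ) (v : ℝ → ℝ) : ℝ :=
  ρ ^ (1 - β) * x ^ k / Real.Gamma α *
    ∫ τ in (0:ℝ)..x, τ ^ (ρ * (η + 1) - 1) * (x ^ ρ - τ ^ ρ) ^ (α - 1) * v τ

/-- `Λ_{x,k}^{ρ,β}(α,η) = (Γ(η+1)/Γ(η+α+1)) ρ^{−β} x^{k+ρ(η+α)}`. -/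
noncomputable def katLambda (ρ β η k x α : ℝ) : ℝ :=
  Real.Gamma (η + 1) / Real.Gamma (η + α + 1) * ρ ^ (-β) * x ^ (k + ρ * (η + α))

lemma lambda_eq {x ρ η α β k : ℝ} (hx : 0 < x) (hρ : 0 < ρ) (hη : -1 < η) (hα : 0 < α) :
    katLambda ρ β η k x α = ρ ^ (1 - β) * x ^ k / Real.Gamma α *
      ∫ τ in Ioc (0:ℝ) x, τ ^ (ρ*(η+1)-1) * (x^ρ - τ^ρ) ^ (α-1) := by
  rw [kernel_value hx hρ hη hα, katLambda]
  have hGα : Real.Gamma α ≠ 0 := (Real.Gamma_pos_of_pos hα).ne'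
  have hG2 : Real.Gamma (η+α+1) ≠ 0 := (Real.Gamma_pos_of_pos (by linarith)).ne'
  have hG1 : Real.Gamma (η+1) ≠ 0 := (Real.Gamma_pos_of_pos (by linarith)).ne'
  have e1 : ρ ^ (1-β) = ρ * ρ ^ (-β) := by
    rw [show (1-β) = 1 + -β by ring, Real.rpow_add hρ, Real.rpow_one]
  have e2 : x ^ (k + ρ*(η+α)) = x ^ k * x ^ (ρ*(η+α)) := Real.rpow_add hx _ _
  rw [e1, e2]
  field_simp [hρ.ne', hGα, hG2]

theorem stmt1 (v : ℝ → ℝ) (m M : ℝ)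
    (hv : IntegrableOn v (Ici (0:ℝ)))
    (hbound : ∀ t ∈ Ici (0:ℝ), m ≤ v t ∧ v t ≤ M)
    (x α δ ρ β lam η k : ℝ)
    (hx : 0 < x) (hα : 0 < α) (hδ : 0 < δ) (hρ : 0 < ρ) (hη : -1 < η) :
    M * katLambda ρ β η k x α * katJ ρ δ lam η k x v +
      m * katLambda ρ lam η k x δ * katJ ρ α β η k x v ≥
    katJ ρ α β η k x v * katJ ρ δ lam η k x v +
      m * M * katLambda ρ β η k x α * katLambda ρ lam η k x δ := by
  have hPα : 0 < ρ ^ (1 - β) * x ^ k / Real.Gamma α := by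
    have := Real.Gamma_pos_of_pos hα
    positivity
  have hPδ : 0 < ρ ^ (1 - lam) * x ^ k / Real.Gamma δ := by
    have := Real.Gamma_pos_of_pos hδ
    positivity
  have hJα : katJ ρ α β η k x v = ρ ^ (1 - β) * x ^ k / Real.Gamma α *
      ∫ τ in Ioc (0:ℝ) x, τ ^ (ρ*(η+1)-1) * (x^ρ - τ^ρ) ^ (α-1) * v τ := by
    rw [katJ, intervalIntegral.integral_of_le hx.le]
  have hJδ : katJ ρ δ lam η k x v = ρ ^ (1 - lam) * x ^ k / Real.Gamma δ *
      ∫ τ in Ioc (0:ℝ) x, τ ^ (ρ*(η+1)-1) * (x^ρ - τ^ρ) ^ (δ-1) * v τ := by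
    rw [katJ, intervalIntegral.integral_of_le hx.le]
  have hΛα := lambda_eq (β := β) (k := k) hx hρ hη hα
  have hΛδ := lambda_eq (β := lam) (k := k) hx hρ hη hδ
  obtain ⟨hbα1, hbα2⟩ := Kv_bounds hv hbound hx hρ hη hα
  obtain ⟨hbδ1, hbδ2⟩ := Kv_bounds hv hbound hx hρ hη hδ
  have h1 : 0 ≤ M * katLambda ρ β η k x α - katJ ρ α β η k x v := by
    rw [hΛα, hJα]
    have : M * (ρ ^ (1 - β) * x ^ k / Real.Gamma α *
        ∫ τ in Ioc (0:ℝ) x, τ ^ (ρ*(η+1)-1) * (x^ρ - τ^ρ) ^ (α-1))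
        - ρ ^ (1 - β) * x ^ k / Real.Gamma α *
        ∫ τ in Ioc (0:ℝ) x, τ ^ (ρ*(η+1)-1) * (x^ρ - τ^ρ) ^ (α-1) * v τ
        = ρ ^ (1 - β) * x ^ k / Real.Gamma α *
          (M * (∫ τ in Ioc (0:ℝ) x, τ ^ (ρ*(η+1)-1) * (x^ρ - τ^ρ) ^ (α-1))
            - ∫ τ in Ioc (0:ℝ) x, τ ^ (ρ*(η+1)-1) * (x^ρ - τ^ρ) ^ (α-1) * v τ) := by ring
    rw [this]
    exact mul_nonneg hPα.le (by linarith)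
  have h2 : 0 ≤ katJ ρ δ lam η k x v - m * katLambda ρ lam η k x δ := by
    rw [hΛδ, hJδ]
    have : ρ ^ (1 - lam) * x ^ k / Real.Gamma δ *
        (∫ τ in Ioc (0:ℝ) x, τ ^ (ρ*(η+1)-1) * (x^ρ - τ^ρ) ^ (δ-1) * v τ)
        - m * (ρ ^ (1 - lam) * x ^ k / Real.Gamma δ *
        ∫ τ in Ioc (0:ℝ) x, τ ^ (ρ*(η+1)-1) * (x^ρ - τ^ρ) ^ (δ-1))
        = ρ ^ (1 - lam) * x ^ k / Real.Gamma δ *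
          ((∫ τ in Ioc (0:ℝ) x, τ ^ (ρ*(η+1)-1) * (x^ρ - τ^ρ) ^ (δ-1) * v τ)
            - m * ∫ τ in Ioc (0:ℝ) x, τ ^ (ρ*(η+1)-1) * (x^ρ - τ^ρ) ^ (δ-1)) := by ring
    rw [this]
    exact mul_nonneg hPδ.le (by linarith)
  nlinarith [mul_nonneg h1 h2]
end

section
/- Let v, u be integrable functions on [0,∞) and suppose there exist constants m, M, p, P ∈ ℝ with m ≤ v(x) ≤ M and p ≤ u(x) ≤ P for all x ∈ [0,∞). Then for all x > 0, α > 0, ρ > 0 and β, η, k ∈ ℝ with η > −1, one has |Λ_{x,k}^{ρ,β}(α,η) · ρJ_{η,k}^{α,β}(vu)(x) − ρJ_{η,k}^{α,β} v(x) · ρJ_{η,k}^{α,β} u(x)| ≤ (Λ_{x,k}^{ρ,β}(α,η))² (M − m)(P − p). -/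
open MeasureTheory Real Set

lemma betaKer_integrable {a b X : ℝ} (ha : 0 < a) (hb : 0 < b) (hX : 0 < X) :
    IntervalIntegrable (fun σ : ℝ => σ ^ (a-1) * (X - σ) ^ (b-1)) volume 0 X := by
  have h1 : IntervalIntegrable (fun σ : ℝ => σ ^ (a-1) * (X - σ) ^ (b-1)) volume 0 (X/2) := by
    apply (intervalIntegral.intervalIntegrable_rpow' (by linarith)).mul_continuousOn
    apply ContinuousOn.rpow_const (by fun_prop)
    intro σ hσ
    rw [uIcc_of_le (by linarith)] at hσ
    exact Or.inl (by have := hσ.2; intro h; linarith)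
  have h2 : IntervalIntegrable (fun σ : ℝ => σ ^ (a-1) * (X - σ) ^ (b-1)) volume (X/2) X := by
    have base : IntervalIntegrable (fun y : ℝ => y ^ (b-1)) volume 0 (X/2) :=
      intervalIntegral.intervalIntegrable_rpow' (by linarith)
    have comp := (base.comp_sub_left X).symm
    have : IntervalIntegrable (fun σ : ℝ => (X - σ) ^ (b-1)) volume (X/2) X := by
      simpa [show X - X/2 = X/2 by ring] using comp
    apply this.continuousOn_mul
    apply ContinuousOn.rpow_const (by fun_prop)
    intro σ hσ
    rw [uIcc_of_le (by linarith)] at hσ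
    exact Or.inl (by have := hσ.1; intro h; rw [h] at this; linarith)
  exact h1.trans h2

lemma betaKer_value {a b X : ℝ} (ha : 0 < a) (hb : 0 < b) (hX : 0 < X) :
    ∫ σ in (0:ℝ)..X, σ ^ (a-1) * (X - σ) ^ (b-1)
      = X ^ (a+b-1) * (Gamma a * Gamma b / Gamma (a+b)) := by
  have hGab : Real.Gamma (a+b) ≠ 0 := (Real.Gamma_pos_of_pos (by linarith)).ne'
  have hC : Complex.Gamma a * Complex.Gamma b
      = Complex.Gamma (a+b) * Complex.betaIntegral a b := by
    have := Complex.Gamma_mul_Gamma_eq_betaIntegral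
      (s := (a:ℂ)) (t := (b:ℂ)) (by simpa using ha) (by simpa using hb)
    simpa using this
  have hScaled := Complex.betaIntegral_scaled (a:ℂ) (b:ℂ) hX
  have heq : (∫ σ in (0:ℝ)..X, (σ:ℂ) ^ ((a:ℂ) - 1) * ((X:ℂ) - σ) ^ ((b:ℂ) - 1))
      = ((∫ σ in (0:ℝ)..X, σ ^ (a-1) * (X - σ) ^ (b-1) : ℝ) : ℂ) := by
    have step : (∫ σ in (0:ℝ)..X, (σ:ℂ) ^ ((a:ℂ) - 1) * ((X:ℂ) - σ) ^ ((b:ℂ) - 1))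
        = ∫ σ in (0:ℝ)..X, ((σ ^ (a-1) * (X - σ) ^ (b-1) : ℝ) : ℂ) := by
      apply intervalIntegral.integral_congr
      intro σ hσ
      rw [uIcc_of_le hX.le] at hσ
      have h1 : ((X:ℂ) - σ) = ((X - σ : ℝ) : ℂ) := by push_cast; ring
      have h2 : ((a:ℂ) - 1) = ((a-1:ℝ):ℂ) := by push_cast; ring
      have h3 : ((b:ℂ) - 1) = ((b-1:ℝ):ℂ) := by push_cast; ring
      show (σ:ℂ) ^ ((a:ℂ) - 1) * ((X:ℂ) - σ) ^ ((b:ℂ) - 1) = ((σ ^ (a-1) * (X - σ) ^ (b-1) : ℝ) : ℂ)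
      rw [h1, h2, h3, ← Complex.ofReal_cpow hσ.1,
        ← Complex.ofReal_cpow (by linarith [hσ.2] : (0:ℝ) ≤ X - σ), ← Complex.ofReal_mul]
    rw [step]
    exact RCLike.intervalIntegral_ofReal
  rw [heq] at hScaled
  have hbeta : Complex.betaIntegral a b = ((Gamma a * Gamma b / Gamma (a+b) : ℝ) : ℂ) := by
    have h2 : ((a:ℂ)+b) = ((a+b:ℝ):ℂ) := by push_cast; ring
    rw [h2, Complex.Gamma_ofReal, Complex.Gamma_ofReal, Complex.Gamma_ofReal] at hC
    have h1 : ((Gamma (a+b) : ℝ) : ℂ) ≠ 0 := by simpa using hGab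
    push_cast
    rw [eq_div_iff h1]
    linear_combination -hC
  rw [hbeta] at hScaled
  have hXc : ((X:ℂ)) ^ ((a:ℂ)+(b:ℂ)-1) = ((X ^ (a+b-1) : ℝ) : ℂ) := by
    rw [show ((a:ℂ)+(b:ℂ)-1) = ((a+b-1:ℝ):ℂ) by push_cast; ring, ← Complex.ofReal_cpow hX.le]
  rw [hXc] at hScaled
  exact_mod_cast hScaled

lemma katKernel_int {x α ρ η : ℝ} (hx : 0 < x) (hα : 0 < α) (hρ : 0 < ρ) (hη : -1 < η) :
    IntegrableOn (fun τ : ℝ => τ ^ (ρ*(η+1)-1) * (x^ρ - τ^ρ)^(α-1)) (Ioc 0 x) ∧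
    ∫ τ in Ioc (0:ℝ) x, τ ^ (ρ*(η+1)-1) * (x^ρ - τ^ρ)^(α-1)
      = (x ^ ρ) ^ (η + α) / ρ * (Gamma (η+1) * Gamma α / Gamma (η+1+α)) := by
  set X := x ^ ρ with hXdef
  have hX : 0 < X := rpow_pos_of_pos hx ρ
  set F : ℝ → ℝ := fun σ => σ ^ η * (X - σ) ^ (α-1) with hF
  set G : ℝ → ℝ := (Ioc (0:ℝ) X).indicator F with hG
  have hFint : IntegrableOn F (Ioc 0 X) := by
    have := betaKer_integrable (a := η+1) (b := α) (by linarith) hα hX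
    rw [intervalIntegrable_iff_integrableOn_Ioc_of_le hX.le] at this
    simpa [hF, add_sub_cancel_right] using this
  have hGint : IntegrableOn G (Ioi 0) :=
    (hFint.integrable_indicator measurableSet_Ioc).integrableOn
  have hker : EqOn (fun τ : ℝ => (|ρ| * τ ^ (ρ-1)) • G (τ ^ ρ))
      ((Ioc (0:ℝ) x).indicator (fun τ => ρ * (τ ^ (ρ*(η+1)-1) * (X - τ^ρ)^(α-1)))) (Ioi 0) := by
    intro τ hτ
    rw [mem_Ioi] at hτ
    rcases le_or_gt τ x with hcase | hcase
    · have hmem : τ ^ ρ ∈ Ioc (0:ℝ) X :=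
        ⟨rpow_pos_of_pos hτ ρ, rpow_le_rpow hτ.le hcase hρ.le⟩
      have hmemx : τ ∈ Ioc (0:ℝ) x := ⟨hτ, hcase⟩
      rw [Set.indicator_of_mem hmemx]
      simp only [hG, indicator_of_mem hmem, hF]
      rw [abs_of_pos hρ, smul_eq_mul]
      have e1 : (τ^ρ)^η = τ^(ρ*η) := (Real.rpow_mul hτ.le ρ η).symm
      have e2 : τ ^ (ρ - 1) * τ ^ (ρ * η) = τ ^ (ρ * (η+1) - 1) := by
        rw [← Real.rpow_add hτ]; congr 1; ring
      calc ρ * τ ^ (ρ-1) * ((τ^ρ)^η * (X - τ^ρ)^(α-1))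
          = ρ * ((τ ^ (ρ-1) * τ ^ (ρ*η)) * (X - τ^ρ)^(α-1)) := by rw [e1]; ring
        _ = ρ * (τ ^ (ρ*(η+1)-1) * (X - τ^ρ)^(α-1)) := by rw [e2]
    · have h1 : τ ^ ρ ∉ Ioc (0:ℝ) X := by
        intro h
        exact absurd h.2 (not_le.mpr (rpow_lt_rpow hx.le hcase hρ))
      have h2 : τ ∉ Ioc (0:ℝ) x := fun h => absurd h.2 (not_le.mpr hcase)
      simp only [hG, indicator_of_notMem h1, indicator_of_notMem h2, smul_zero]
  have hcompInt : IntegrableOn (fun τ => (|ρ| * τ ^ (ρ-1)) • G (τ ^ ρ)) (Ioi 0) :=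
    (integrableOn_Ioi_comp_rpow_iff G hρ.ne').mpr hGint
  have hIndInt : IntegrableOn
      ((Ioc (0:ℝ) x).indicator (fun τ => ρ * (τ ^ (ρ*(η+1)-1) * (X - τ^ρ)^(α-1)))) (Ioi 0) :=
    hcompInt.congr_fun hker measurableSet_Ioi
  have hinter : Ioc (0:ℝ) x ∩ Ioi 0 = Ioc 0 x :=
    inter_eq_self_of_subset_left Ioc_subset_Ioi_self
  have hmulInt : IntegrableOn (fun τ => ρ * (τ ^ (ρ*(η+1)-1) * (X - τ^ρ)^(α-1))) (Ioc 0 x) := by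
    have := (integrable_indicator_iff measurableSet_Ioc).mp hIndInt
    rwa [IntegrableOn, Measure.restrict_restrict measurableSet_Ioc, hinter] at this
  have hKint : IntegrableOn (fun τ : ℝ => τ ^ (ρ*(η+1)-1) * (x^ρ - τ^ρ)^(α-1)) (Ioc 0 x) := by
    refine ((hmulInt.const_mul ρ⁻¹).congr (ae_of_all _ fun τ => ?_))
    simp only [← mul_assoc, inv_mul_cancel₀ hρ.ne', one_mul, ← hXdef]
  refine ⟨hKint, ?_⟩
  have hval : ∫ τ in Ioi (0:ℝ), (|ρ| * τ ^ (ρ-1)) • G (τ ^ ρ) = ∫ σ in Ioi (0:ℝ), G σ :=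
    integral_comp_rpow_Ioi G hρ.ne'
  rw [setIntegral_congr_fun measurableSet_Ioi hker] at hval
  rw [setIntegral_indicator measurableSet_Ioc,
    inter_eq_self_of_subset_right Ioc_subset_Ioi_self] at hval
  have hrhs : ∫ σ in Ioi (0:ℝ), G σ
      = X ^ (η + α) * (Gamma (η+1) * Gamma α / Gamma (η+1+α)) := by
    rw [hG, setIntegral_indicator measurableSet_Ioc,
      inter_eq_self_of_subset_right Ioc_subset_Ioi_self, hF,
      ← intervalIntegral.integral_of_le hX.le]
    have := betaKer_value (a := η+1) (b := α) (by linarith) hα hX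
    simp only [add_sub_cancel_right] at this
    rw [show (fun σ : ℝ => σ ^ η * (X - σ) ^ (α-1)) = fun σ : ℝ => σ ^ (η+1-1) * (X - σ) ^ (α-1) by
      funext σ; rw [add_sub_cancel_right]]
    rw [betaKer_value (by linarith) hα hX]
    congr 1
    congr 1
    ring
  rw [hrhs, integral_const_mul] at hval
  rw [show (fun τ : ℝ => τ ^ (ρ*(η+1)-1) * (x^ρ - τ^ρ)^(α-1))
      = fun τ : ℝ => τ ^ (ρ*(η+1)-1) * (X - τ^ρ)^(α-1) from rfl]
  have hΓ : Gamma (η+1+α) ≠ 0 := (Real.Gamma_pos_of_pos (by linarith : (0:ℝ) < η+1+α)).ne'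
  field_simp [hρ.ne', hΓ] at hval ⊢
  linear_combination hval


lemma Kmul_integrable {K w : ℝ → ℝ} {s : Set ℝ} {c : ℝ} (hs : MeasurableSet s)
    (hK : IntegrableOn K s) (hw : AEStronglyMeasurable w (volume.restrict s))
    (hb : ∀ t ∈ s, |w t| ≤ c) : IntegrableOn (fun τ => K τ * w τ) s := by
  have h : IntegrableOn (fun τ => w τ * K τ) s :=
    hK.bdd_mul hw ((ae_restrict_iff' hs).mpr (ae_of_all _ fun t ht => by
      simpa [Real.norm_eq_abs] using hb t ht))
  exact h.congr (ae_of_all _ fun τ => mul_comm _ _)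

lemma Kmul_bound {K w : ℝ → ℝ} {s : Set ℝ} {c : ℝ} (hs : MeasurableSet s)
    (hK : IntegrableOn K s) (hKnn : ∀ t ∈ s, 0 ≤ K t)
    (hb : ∀ t ∈ s, |w t| ≤ c) :
    |∫ τ in s, K τ * w τ| ≤ c * ∫ τ in s, K τ := by
  have h1 : |∫ τ in s, K τ * w τ| ≤ ∫ τ in s, c * K τ := by
    rw [← Real.norm_eq_abs]
    apply norm_integral_le_of_norm_le (hK.const_mul c)
    refine (ae_restrict_iff' hs).mpr (ae_of_all _ fun t ht => ?_)
    rw [Real.norm_eq_abs, abs_mul, abs_of_nonneg (hKnn t ht)]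
    calc K t * |w t| ≤ K t * c := mul_le_mul_of_nonneg_left (hb t ht) (hKnn t ht)
      _ = c * K t := mul_comm _ _
  rwa [integral_const_mul] at h1


theorem stmt4 (v u : ℝ → ℝ) (m M p P : ℝ)
    (hv : IntegrableOn v (Ici (0:ℝ)))
    (hu : IntegrableOn u (Ici (0:ℝ)))
    (hbv : ∀ t ∈ Ici (0:ℝ), m ≤ v t ∧ v t ≤ M)
    (hbu : ∀ t ∈ Ici (0:ℝ), p ≤ u t ∧ u t ≤ P)
    (x α ρ β η k : ℝ)
    (hx : 0 < x) (hα : 0 < α) (hρ : 0 < ρ) (hη : -1 < η) :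
    |katLambda ρ β η k x α * katJ ρ α β η k x (fun t => v t * u t) -
      katJ ρ α β η k x v * katJ ρ α β η k x u| ≤
    (katLambda ρ β η k x α) ^ 2 * (M - m) * (P - p) := by
  have hΓα : 0 < Gamma α := Real.Gamma_pos_of_pos hα
  obtain ⟨hKint, hKval⟩ := katKernel_int hx hα hρ hη
  set K : ℝ → ℝ := fun τ => τ ^ (ρ*(η+1)-1) * (x^ρ - τ^ρ)^(α-1) with hKdef
  set s : Set ℝ := Ioc (0:ℝ) x with hsdef
  have hsm : MeasurableSet s := measurableSet_Ioc
  have hKnn : ∀ t ∈ s, 0 ≤ K t := fun t ht =>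
    mul_nonneg (rpow_nonneg ht.1.le _)
      (rpow_nonneg (sub_nonneg.mpr (rpow_le_rpow ht.1.le ht.2 hρ.le)) _)
  have hsub : volume.restrict s ≤ volume.restrict (Ici (0:ℝ)) :=
    Measure.restrict_mono (fun t ht => mem_Ici.mpr ht.1.le) le_rfl
  have hvm : AEStronglyMeasurable v (volume.restrict s) :=
    hv.aestronglyMeasurable.mono_measure hsub
  have hum : AEStronglyMeasurable u (volume.restrict s) :=
    hu.aestronglyMeasurable.mono_measure hsub
  have hmM : m ≤ M := le_trans (hbv 0 (mem_Ici.mpr le_rfl)).1 (hbv 0 (mem_Ici.mpr le_rfl)).2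
  have hpP : p ≤ P := le_trans (hbu 0 (mem_Ici.mpr le_rfl)).1 (hbu 0 (mem_Ici.mpr le_rfl)).2
  have hbv' : ∀ t ∈ s, |v t - (m+M)/2| ≤ (M-m)/2 := fun t ht => by
    obtain ⟨h1, h2⟩ := hbv t (mem_Ici.mpr ht.1.le)
    rw [abs_le]; constructor <;> linarith
  have hbu' : ∀ t ∈ s, |u t - (p+P)/2| ≤ (P-p)/2 := fun t ht => by
    obtain ⟨h1, h2⟩ := hbu t (mem_Ici.mpr ht.1.le)
    rw [abs_le]; constructor <;> linarith
  have hbvu : ∀ t ∈ s, |(v t - (m+M)/2) * (u t - (p+P)/2)| ≤ (M-m)/2 * ((P-p)/2) :=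
    fun t ht => by
      rw [abs_mul]
      exact mul_le_mul (hbv' t ht) (hbu' t ht) (abs_nonneg _) (by linarith)
  have hbvabs : ∀ t ∈ s, |v t| ≤ |m| + |M| := fun t ht => by
    obtain ⟨h1, h2⟩ := hbv t (mem_Ici.mpr ht.1.le)
    rw [abs_le]
    constructor
    · linarith [neg_abs_le m, abs_nonneg M]
    · linarith [le_abs_self M, abs_nonneg m]
  have hbuabs : ∀ t ∈ s, |u t| ≤ |p| + |P| := fun t ht => by
    obtain ⟨h1, h2⟩ := hbu t (mem_Ici.mpr ht.1.le)
    rw [abs_le]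
    constructor
    · linarith [neg_abs_le p, abs_nonneg P]
    · linarith [le_abs_self P, abs_nonneg p]
  have hbvuabs : ∀ t ∈ s, |v t * u t| ≤ (|m|+|M|)*(|p|+|P|) := fun t ht => by
    rw [abs_mul]
    exact mul_le_mul (hbvabs t ht) (hbuabs t ht) (abs_nonneg _) (by positivity)
  have hIv : IntegrableOn (fun τ => K τ * v τ) s := Kmul_integrable hsm hKint hvm hbvabs
  have hIu : IntegrableOn (fun τ => K τ * u τ) s := Kmul_integrable hsm hKint hum hbuabs
  have hIvu : IntegrableOn (fun τ => K τ * (v τ * u τ)) s :=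
    Kmul_integrable hsm hKint (hvm.mul hum) hbvuabs
  set I1 : ℝ := ∫ τ in s, K τ with hI1
  set Iv : ℝ := ∫ τ in s, K τ * v τ with hIvd
  set Iu : ℝ := ∫ τ in s, K τ * u τ with hIud
  set Ivu : ℝ := ∫ τ in s, K τ * (v τ * u τ) with hIvud
  have hI1nn : 0 ≤ I1 := setIntegral_nonneg hsm hKnn
  have linv : ∫ τ in s, K τ * (v τ - (m+M)/2) = Iv - (m+M)/2 * I1 := by
    have e : (fun τ => K τ * (v τ - (m+M)/2)) = fun τ => K τ * v τ - (m+M)/2 * K τ := by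
      funext τ; ring
    rw [e, integral_sub hIv (hKint.const_mul _), integral_const_mul, hIvd, hI1]
  have linu : ∫ τ in s, K τ * (u τ - (p+P)/2) = Iu - (p+P)/2 * I1 := by
    have e : (fun τ => K τ * (u τ - (p+P)/2)) = fun τ => K τ * u τ - (p+P)/2 * K τ := by
      funext τ; ring
    rw [e, integral_sub hIu (hKint.const_mul _), integral_const_mul, hIud, hI1]
  have linvu : ∫ τ in s, K τ * ((v τ - (m+M)/2) * (u τ - (p+P)/2))
      = Ivu - (p+P)/2 * Iv - (m+M)/2 * Iu + (m+M)/2 * ((p+P)/2) * I1 := by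
    have e : (fun τ => K τ * ((v τ - (m+M)/2) * (u τ - (p+P)/2)))
        = fun τ => (K τ * (v τ * u τ) - (p+P)/2 * (K τ * v τ))
            - ((m+M)/2 * (K τ * u τ) - (m+M)/2 * ((p+P)/2) * K τ) := by funext τ; ring
    have j1 : ∫ τ in s, (K τ * (v τ * u τ) - (p+P)/2 * (K τ * v τ))
        = Ivu - (p+P)/2 * Iv := by
      rw [integral_sub hIvu (hIv.const_mul _), integral_const_mul]
    have j2 : ∫ τ in s, ((m+M)/2 * (K τ * u τ) - (m+M)/2 * ((p+P)/2) * K τ)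
        = (m+M)/2 * Iu - (m+M)/2 * ((p+P)/2) * I1 := by
      rw [integral_sub (hIu.const_mul _) (hKint.const_mul _), integral_const_mul,
        integral_const_mul]
    have k1 : Integrable (fun τ => K τ * (v τ * u τ) - (p+P)/2 * (K τ * v τ))
        (volume.restrict s) := hIvu.sub (hIv.const_mul _)
    have k2 : Integrable (fun τ => (m+M)/2 * (K τ * u τ) - (m+M)/2 * ((p+P)/2) * K τ)
        (volume.restrict s) := (hIu.const_mul _).sub (hKint.const_mul _)
    rw [e, integral_sub k1 k2, j1, j2]
    ring
  have B1 : |∫ τ in s, K τ * ((v τ - (m+M)/2) * (u τ - (p+P)/2))| ≤ (M-m)/2 * ((P-p)/2) * I1 :=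
    Kmul_bound hsm hKint hKnn hbvu
  have B2 : |Iv - (m+M)/2 * I1| ≤ (M-m)/2 * I1 := by
    rw [← linv]; exact Kmul_bound hsm hKint hKnn hbv'
  have B3 : |Iu - (p+P)/2 * I1| ≤ (P-p)/2 * I1 := by
    rw [← linu]; exact Kmul_bound hsm hKint hKnn hbu'
  have core : |I1 * Ivu - Iv * Iu| ≤ I1^2 * (M-m) * (P-p) := by
    have key : I1 * Ivu - Iv * Iu
        = I1 * (∫ τ in s, K τ * ((v τ - (m+M)/2) * (u τ - (p+P)/2)))
          - (Iv - (m+M)/2 * I1) * (Iu - (p+P)/2 * I1) := by rw [linvu]; ring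
    have t1 : |I1 * (∫ τ in s, K τ * ((v τ - (m+M)/2) * (u τ - (p+P)/2)))|
        ≤ I1 * ((M-m)/2 * ((P-p)/2) * I1) := by
      rw [abs_mul, abs_of_nonneg hI1nn]
      exact mul_le_mul_of_nonneg_left B1 hI1nn
    have t2 : |(Iv - (m+M)/2 * I1) * (Iu - (p+P)/2 * I1)| ≤ ((M-m)/2*I1) * ((P-p)/2*I1) := by
      rw [abs_mul]
      exact mul_le_mul B2 B3 (abs_nonneg _) (mul_nonneg (by linarith) hI1nn)
    have h0 : 0 ≤ I1^2 * (M-m) * (P-p) :=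
      mul_nonneg (mul_nonneg (sq_nonneg I1) (by linarith)) (by linarith)
    rw [key]
    calc |I1 * (∫ τ in s, K τ * ((v τ - (m+M)/2) * (u τ - (p+P)/2)))
          - (Iv - (m+M)/2 * I1) * (Iu - (p+P)/2 * I1)|
        ≤ |I1 * (∫ τ in s, K τ * ((v τ - (m+M)/2) * (u τ - (p+P)/2)))|
          + |(Iv - (m+M)/2 * I1) * (Iu - (p+P)/2 * I1)| := abs_sub _ _
      _ ≤ I1 * ((M-m)/2 * ((P-p)/2) * I1) + ((M-m)/2*I1) * ((P-p)/2*I1) := add_le_add t1 t2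
      _ = I1^2 * (M-m) * (P-p) / 2 := by ring
      _ ≤ I1^2 * (M-m) * (P-p) := by linarith
  set C : ℝ := ρ ^ (1-β) * x ^ k / Gamma α with hCdef
  have hCnn : 0 ≤ C :=
    div_nonneg (mul_nonneg (rpow_nonneg hρ.le _) (rpow_nonneg hx.le _)) hΓα.le
  have hJv : katJ ρ α β η k x v = C * Iv := by
    rw [katJ, intervalIntegral.integral_of_le hx.le, hCdef, hIvd]
  have hJu : katJ ρ α β η k x u = C * Iu := by
    rw [katJ, intervalIntegral.integral_of_le hx.le, hCdef, hIud]
  have hJvu : katJ ρ α β η k x (fun t => v t * u t) = C * Ivu := by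
    rw [katJ, intervalIntegral.integral_of_le hx.le, hCdef, hIvud]
  have hΛ : katLambda ρ β η k x α = C * I1 := by
    rw [katLambda, hKval, hCdef]
    have e1 : (x^ρ)^(η+α) = x^(ρ*(η+α)) := (Real.rpow_mul hx.le ρ (η+α)).symm
    have e2 : x ^ (k + ρ*(η+α)) = x^k * x^(ρ*(η+α)) := Real.rpow_add hx k _
    have e3 : ρ ^ (1-β) = ρ * ρ^(-β) := by
      rw [show (1-β) = 1 + (-β) by ring, Real.rpow_add hρ, Real.rpow_one]
    have e4 : Gamma (η+1+α) = Gamma (η+α+1) := by rw [show η+1+α = η+α+1 by ring]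
    rw [e1, e2, e3, e4]
    have hΓ2 : Gamma (η+α+1) ≠ 0 := (Real.Gamma_pos_of_pos (by linarith)).ne'
    field_simp
  rw [hJv, hJu, hJvu, hΛ]
  rw [show C*I1 * (C*Ivu) - C*Iv*(C*Iu) = C^2 * (I1*Ivu - Iv*Iu) by ring, abs_mul,
    abs_of_nonneg (by positivity : (0:ℝ) ≤ C^2),
    show (C*I1)^2*(M-m)*(P-p) = C^2 * (I1^2*(M-m)*(P-p)) by ring]
  refine mul_le_mul_of_nonneg_left ?_ (by positivity)
  calc |I1*Ivu - Iv*Iu| ≤ I1^2 * (M-m) * (P-p) := core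
    _ = I1^2 * ((M-m)*(P-p)) := by ring
    _ = I1^2*(M-m)*(P-p) := by ring
end

section
/- Let v, u be integrable functions on [0,∞) and suppose there exist constants m, M, n, N ∈ ℝ satisfying m ≤ v(x) ≤ M and n ≤ u(x) ≤ N for all x ∈ [0,∞). Then for all x > 0, α > 0, δ > 0, ρ > 0 and β, λ, η, k ∈ ℝ with η > −1, one has M · Λ_{x,k}^{ρ,β}(α,η) · ρJ_{η,k}^{δ,λ} u(x) + n · Λ_{x,k}^{ρ,λ}(δ,η) · ρJ_{η,k}^{α,β} v(x) ≥ n·M · Λ_{x,k}^{ρ,λ}(δ,η) · Λ_{x,k}^{ρ,β}(α,η) + ρJ_{η,k}^{δ,λ} u(x) · ρJ_{η,k}^{α,β} v(x). -/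
open MeasureTheory Real Set

lemma real_beta_integrable {a b : ℝ} (ha : 0 < a) (hb : 0 < b) :
    IntervalIntegrable (fun t : ℝ => t ^ (a - 1) * (1 - t) ^ (b - 1)) volume 0 1 := by
  have hc := Complex.betaIntegral_convergent (u := (a:ℂ)) (v := (b:ℂ)) (by simpa) (by simpa)
  rw [intervalIntegrable_iff] at hc ⊢
  have : EqOn (fun t : ℝ => t ^ (a - 1) * (1 - t) ^ (b - 1))
      (fun t : ℝ => ((t:ℂ) ^ ((a:ℂ) - 1) * (1 - (t:ℂ)) ^ ((b:ℂ) - 1)).re) (Set.uIoc (0:ℝ) 1) := by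
    intro t ht
    rw [uIoc_of_le zero_le_one] at ht
    have h0 : (0:ℝ) ≤ t := ht.1.le
    have h1 : (0:ℝ) ≤ 1 - t := by linarith [ht.2]
    have e1 : (t:ℂ) ^ ((a:ℂ) - 1) = ((t ^ (a-1) : ℝ) : ℂ) := by
      rw [Complex.ofReal_cpow h0]; push_cast; ring_nf
    have e2 : (1 - (t:ℂ)) ^ ((b:ℂ) - 1) = (((1-t) ^ (b-1) : ℝ) : ℂ) := by
      rw [Complex.ofReal_cpow h1]; push_cast; ring_nf
    simp [e1, e2, ← Complex.ofReal_mul]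
  exact (IntegrableOn.congr_fun hc.re this.symm measurableSet_uIoc)

lemma real_beta {a b : ℝ} (ha : 0 < a) (hb : 0 < b) :
    ∫ t in (0:ℝ)..1, t ^ (a - 1) * (1 - t) ^ (b - 1) = Gamma a * Gamma b / Gamma (a + b) := by
  have h := Complex.Gamma_mul_Gamma_eq_betaIntegral (s := (a:ℂ)) (t := (b:ℂ)) (by simpa) (by simpa)
  have hcongr : Complex.betaIntegral a b
      = ((∫ t in (0:ℝ)..1, t ^ (a - 1) * (1 - t) ^ (b - 1) : ℝ) : ℂ) := by
    rw [Complex.betaIntegral, ← intervalIntegral.integral_ofReal]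
    refine intervalIntegral.integral_congr_ae ?_
    filter_upwards with t
    intro ht
    rw [uIoc_of_le zero_le_one] at ht
    have h0 : (0:ℝ) ≤ t := ht.1.le
    have h1 : (0:ℝ) ≤ 1 - t := by linarith [ht.2]
    have e1 : (t:ℂ) ^ ((a:ℂ) - 1) = ((t ^ (a-1) : ℝ) : ℂ) := by
      rw [Complex.ofReal_cpow h0]; push_cast; ring_nf
    have e2 : (1 - (t:ℂ)) ^ ((b:ℂ) - 1) = (((1-t) ^ (b-1) : ℝ) : ℂ) := by
      rw [Complex.ofReal_cpow h1]; push_cast; ring_nf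
    simp [e1, e2, ← Complex.ofReal_mul]
  rw [hcongr, ← Complex.ofReal_add, Complex.Gamma_ofReal, Complex.Gamma_ofReal,
    Complex.Gamma_ofReal, ← Complex.ofReal_mul, ← Complex.ofReal_mul] at h
  have h' := Complex.ofReal_injective h
  have hG : Gamma (a + b) ≠ 0 := (Gamma_pos_of_pos (by linarith)).ne'
  field_simp
  linarith [h']

section
variable {x ρ η α : ℝ}

lemma kernel_ptwise (hx : 0 < x) (hρ : 0 < ρ) {τ : ℝ} (hτ : τ ∈ Ioo 0 x) :
    (ρ * τ ^ (ρ-1) / x ^ ρ) * (((τ/x) ^ ρ) ^ η * (1 - (τ/x) ^ ρ) ^ (α-1))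
      = ρ * x ^ (-(ρ*(η+α))) * (τ ^ (ρ*(η+1)-1) * (x ^ ρ - τ ^ ρ) ^ (α-1)) := by
  obtain ⟨hτ0, hτx⟩ := hτ
  have hxρ : (0:ℝ) < x ^ ρ := rpow_pos_of_pos hx ρ
  have hτρ : τ ^ ρ < x ^ ρ := rpow_lt_rpow hτ0.le hτx hρ
  have hsub : (0:ℝ) ≤ x ^ ρ - τ ^ ρ := by linarith
  have e1 : (τ/x) ^ ρ = τ ^ ρ / x ^ ρ := div_rpow hτ0.le hx.le ρ
  have e2 : (τ ^ ρ / x ^ ρ) ^ η = τ ^ (ρ*η) / x ^ (ρ*η) := by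
    rw [div_rpow (rpow_nonneg hτ0.le ρ) (rpow_nonneg hx.le ρ), ← Real.rpow_mul hτ0.le,
      ← Real.rpow_mul hx.le]
  have e3 : 1 - τ ^ ρ / x ^ ρ = (x ^ ρ - τ ^ ρ) / x ^ ρ := by field_simp
  have e4 : ((x ^ ρ - τ ^ ρ) / x ^ ρ) ^ (α-1) = (x ^ ρ - τ ^ ρ) ^ (α-1) / x ^ (ρ*(α-1)) := by
    rw [div_rpow hsub (rpow_nonneg hx.le ρ), ← Real.rpow_mul hx.le]
  have e5 : τ ^ (ρ*(η+1)-1) = τ ^ (ρ-1) * τ ^ (ρ*η) := by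
    rw [← Real.rpow_add hτ0]; ring_nf
  have e6 : x ^ (-(ρ*(η+α))) = (x ^ ρ * x ^ (ρ*η) * x ^ (ρ*(α-1)))⁻¹ := by
    rw [← Real.rpow_add hx, ← Real.rpow_add hx, ← rpow_neg hx.le]
    ring_nf
  rw [e1, e2, e3, e4, e5, e6]
  have h1 : x ^ ρ ≠ 0 := hxρ.ne'
  have h2 : x ^ (ρ*η) ≠ 0 := (rpow_pos_of_pos hx _).ne'
  have h3 : x ^ (ρ*(α-1)) ≠ 0 := (rpow_pos_of_pos hx _).ne'
  field_simp

lemma kernel_facts (hx : 0 < x) (hρ : 0 < ρ) (hη : -1 < η) (hα : 0 < α) :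
    IntervalIntegrable (fun τ : ℝ => τ ^ (ρ*(η+1)-1) * (x ^ ρ - τ ^ ρ) ^ (α-1)) volume 0 x ∧
    ∫ τ in (0:ℝ)..x, τ ^ (ρ*(η+1)-1) * (x ^ ρ - τ ^ ρ) ^ (α-1)
      = Gamma (η+1) * Gamma α / Gamma (η + α + 1) * x ^ (ρ*(η+α)) / ρ := by
  set K : ℝ → ℝ := fun τ => τ ^ (ρ*(η+1)-1) * (x ^ ρ - τ ^ ρ) ^ (α-1) with hK
  set g : ℝ → ℝ := fun t => t ^ η * (1-t) ^ (α-1) with hg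
  have hηα : (0:ℝ) < η + 1 := by linarith
  have hbint : IntervalIntegrable (fun t : ℝ => t ^ (η+1-1) * (1-t) ^ (α-1)) volume 0 1 :=
    real_beta_integrable hηα hα
  have hgbint : IntervalIntegrable g volume 0 1 := by
    have : (fun t : ℝ => t ^ (η+1-1) * (1-t) ^ (α-1)) = g := by
      funext t; rw [hg]; norm_num
    rwa [this] at hbint
  have hgIcc : IntegrableOn g (Icc (0:ℝ) 1) := by
    rwa [intervalIntegrable_iff_integrableOn_Icc_of_le zero_le_one] at hgbint
  set f : ℝ → ℝ := fun τ => (τ/x) ^ ρ with hf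
  set F : ℝ → ℝ := fun τ => ρ * τ ^ (ρ-1) / x ^ ρ with hF
  have hderivAt : ∀ τ ∈ Ioo (0:ℝ) x, HasDerivAt f (F τ) τ := by
    intro τ hτ
    have h1 : HasDerivAt (fun τ : ℝ => τ / x) (1 / x) τ := (hasDerivAt_id τ).div_const x
    have h2 := h1.rpow_const (p := ρ) (Or.inl (div_pos hτ.1 hx).ne')
    have h3 : 1 / x * ρ * (τ/x) ^ (ρ-1) = F τ := by
      rw [div_rpow hτ.1.le hx.le, hF]
      rw [show x ^ ρ = x ^ (ρ-1) * x from by rw [← Real.rpow_add_one hx.ne']; ring_nf]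
      have := (rpow_pos_of_pos hx (ρ-1)).ne'
      field_simp
    exact h3 ▸ h2
  have hmono : StrictMonoOn f (Ioo (0:ℝ) x) := by
    intro a ha b hb hab
    exact rpow_lt_rpow (div_nonneg ha.1.le hx.le) (by gcongr) hρ
  have himg : f '' Ioo (0:ℝ) x ⊆ Ioo (0:ℝ) 1 := by
    rintro _ ⟨τ, hτ, rfl⟩
    exact ⟨rpow_pos_of_pos (div_pos hτ.1 hx) ρ,
      rpow_lt_one (div_nonneg hτ.1.le hx.le) ((div_lt_one hx).mpr hτ.2) hρ⟩
  have himgIcc : f '' Icc (0:ℝ) x ⊆ Icc (0:ℝ) 1 := by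
    rintro _ ⟨τ, hτ, rfl⟩
    exact ⟨rpow_nonneg (div_nonneg hτ.1 hx.le) ρ,
      rpow_le_one (div_nonneg hτ.1 hx.le) ((div_le_one hx).mpr hτ.2) hρ.le⟩
  have key : IntegrableOn (fun τ => |F τ| • g (f τ)) (Ioo (0:ℝ) x) :=
    (integrableOn_image_iff_integrableOn_abs_deriv_smul measurableSet_Ioo
      (fun τ hτ => (hderivAt τ hτ).hasDerivWithinAt) (hmono.injOn) g).mp
      ((hgIcc.mono_set (Ioo_subset_Icc_self)).mono_set himg)
  have habs : ∀ τ ∈ Ioo (0:ℝ) x, |F τ| • g (f τ) = F τ * g (f τ) := by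
    intro τ hτ
    have : 0 ≤ F τ :=
      div_nonneg (mul_nonneg hρ.le (rpow_nonneg hτ.1.le _)) (rpow_nonneg hx.le _)
    rw [abs_of_nonneg this, smul_eq_mul]
  have keyptw : ∀ τ ∈ Ioo (0:ℝ) x, F τ * g (f τ) = ρ * x ^ (-(ρ*(η+α))) * K τ := by
    intro τ hτ
    exact kernel_ptwise hx hρ hτ
  have hFint : IntegrableOn (fun τ => F τ * g (f τ)) (Ioo (0:ℝ) x) :=
    key.congr_fun (fun τ hτ => (habs τ hτ)) measurableSet_Ioo
  have hcne : (ρ * x ^ (-(ρ*(η+α))) : ℝ) ≠ 0 := by positivity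
  have hKint : IntegrableOn K (Ioo (0:ℝ) x) := by
    have h1 : IntegrableOn (fun τ => (ρ * x ^ (-(ρ*(η+α))))⁻¹ * (F τ * g (f τ)))
        (Ioo (0:ℝ) x) := hFint.const_mul _
    refine h1.congr_fun (fun τ hτ => ?_) measurableSet_Ioo
    beta_reduce
    rw [keyptw τ hτ]
    field_simp
  have hKii : IntervalIntegrable K volume 0 x := by
    rw [intervalIntegrable_iff_integrableOn_Icc_of_le hx.le,
      integrableOn_Icc_iff_integrableOn_Ioo]
    exact hKint
  refine ⟨hKii, ?_⟩
  -- now compute the integral via substitution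
  have hfc : ContinuousOn f (uIcc (0:ℝ) x) :=
    ((continuous_id.div_const x).rpow_const (fun _ => Or.inr hρ.le)).continuousOn
  have hminmax : Ioo (min (0:ℝ) x) (max 0 x) = Ioo 0 x := by
    rw [min_eq_left hx.le, max_eq_right hx.le]
  have huIcc : uIcc (0:ℝ) x = Icc 0 x := uIcc_of_le hx.le
  have hgcont : ContinuousOn g (f '' Ioo (min (0:ℝ) x) (max 0 x)) := by
    rw [hminmax]
    refine ContinuousOn.mono ?_ himg
    apply ContinuousOn.mul
    · exact ContinuousOn.rpow_const continuousOn_id (fun t ht => Or.inl ht.1.ne')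
    · exact ContinuousOn.rpow_const (continuousOn_const.sub continuousOn_id)
        (fun t ht => Or.inl (by simp; linarith [ht.2]))
  have hsubst := intervalIntegral.integral_comp_smul_deriv''' (a := (0:ℝ)) (b := x)
    (f := f) (f' := F) (g := g) hfc
    (by rw [hminmax]; exact fun τ hτ => (hderivAt τ hτ).hasDerivWithinAt)
    hgcont (hgIcc.mono_set (by rw [huIcc]; exact himgIcc))
    (by
      rw [huIcc, integrableOn_Icc_iff_integrableOn_Ioo]
      exact key.congr_fun (fun τ hτ => by beta_reduce; rw [habs τ hτ, smul_eq_mul]; rfl) measurableSet_Ioo)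
  have hf0 : f 0 = 0 := by rw [hf]; simp [zero_rpow hρ.ne']
  have hfx : f x = 1 := by rw [hf]; simp [div_self hx.ne']
  have hbval : ∫ u in (f 0)..(f x), g u = Gamma (η+1) * Gamma α / Gamma (η + α + 1) := by
    rw [hf0, hfx]
    have : ∫ t in (0:ℝ)..1, t ^ (η+1-1) * (1-t) ^ (α-1)
        = Gamma (η+1) * Gamma α / Gamma (η+1+α) := real_beta hηα hα
    rw [show η + α + 1 = η + 1 + α from by ring, ← this]
    refine intervalIntegral.integral_congr (fun t _ => ?_)
    rw [hg]; norm_num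
  have hxne : ∀ᵐ τ : ℝ ∂volume, τ ≠ x := by
    rw [ae_iff]
    simpa [not_not, setOf_eq_eq_singleton] using measure_singleton x
  have hlhs : ∫ τ in (0:ℝ)..x, F τ • (g ∘ f) τ
      = ρ * x ^ (-(ρ*(η+α))) * ∫ τ in (0:ℝ)..x, K τ := by
    rw [← intervalIntegral.integral_const_mul]
    refine intervalIntegral.integral_congr_ae ?_
    filter_upwards [hxne] with τ hne hmem
    rw [uIoc_of_le hx.le] at hmem
    have hτ : τ ∈ Ioo (0:ℝ) x := ⟨hmem.1, lt_of_le_of_ne hmem.2 hne⟩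
    have : F τ • (g ∘ f) τ = F τ * g (f τ) := by rw [smul_eq_mul]; rfl
    rw [this, keyptw τ hτ]
  rw [hlhs, hbval] at hsubst
  have hxe : x ^ (-(ρ*(η+α))) = (x ^ (ρ*(η+α)))⁻¹ := rpow_neg hx.le _
  have hxpos : (0:ℝ) < x ^ (ρ*(η+α)) := rpow_pos_of_pos hx _
  rw [hxe] at hsubst
  field_simp at hsubst
  have hI : (∫ τ in (0:ℝ)..x, K τ)
      = Gamma (η+1) * Gamma α * x ^ (ρ*(η+α)) / Gamma (η+α+1) / ρ := by
    have hG : 0 < Gamma (η+α+1) := Gamma_pos_of_pos (by linarith)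
    rw [eq_div_iff hG.ne'] at hsubst
    rw [div_div, eq_div_iff (mul_pos hG hρ).ne']
    linear_combination hsubst
  rw [hI]
  ring
end

lemma katJ_bounds {w : ℝ → ℝ} {c C : ℝ} (hw : IntegrableOn w (Ici (0:ℝ)))
    (hbw : ∀ t ∈ Ici (0:ℝ), c ≤ w t ∧ w t ≤ C)
    (x α ρ β η k : ℝ) (hx : 0 < x) (hα : 0 < α) (hρ : 0 < ρ) (hη : -1 < η) :
    c * katLambda ρ β η k x α ≤ katJ ρ α β η k x w ∧
      katJ ρ α β η k x w ≤ C * katLambda ρ β η k x α := by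
  set K : ℝ → ℝ := fun τ => τ ^ (ρ*(η+1)-1) * (x ^ ρ - τ ^ ρ) ^ (α-1) with hKdef
  obtain ⟨hKii, hKval⟩ := kernel_facts hx hρ hη hα
  have hKnn : ∀ τ ∈ Icc (0:ℝ) x, 0 ≤ K τ := by
    intro τ hτ
    have h1 : (0:ℝ) ≤ τ ^ ρ := rpow_nonneg hτ.1 ρ
    have h2 : τ ^ ρ ≤ x ^ ρ := rpow_le_rpow hτ.1 hτ.2 hρ.le
    exact mul_nonneg (rpow_nonneg hτ.1 _) (rpow_nonneg (by linarith) _)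
  set C' : ℝ := max |c| |C| with hC'
  have hwabs : ∀ t ∈ Icc (0:ℝ) x, |w t| ≤ C' := by
    intro t ht
    obtain ⟨h1, h2⟩ := hbw t ht.1
    rw [abs_le]
    constructor
    · calc -C' ≤ -|c| := by simp [hC']
        _ ≤ c := neg_abs_le c
        _ ≤ w t := h1
    · calc w t ≤ C := h2
        _ ≤ |C| := le_abs_self C
        _ ≤ C' := le_max_right _ _
  have hKIoc : IntegrableOn K (Ioc (0:ℝ) x) := by
    have := hKii
    rwa [intervalIntegrable_iff, uIoc_of_le hx.le] at this
  have hKmeas : Measurable K := by fun_prop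
  have hwm : AEStronglyMeasurable w (volume.restrict (Ioc (0:ℝ) x)) :=
    (hw.mono_set (fun t ht => ht.1.le)).aestronglyMeasurable
  have hKw : IntegrableOn (fun τ => K τ * w τ) (Ioc (0:ℝ) x) := by
    refine Integrable.mono' (hKIoc.const_mul C') (hKmeas.aestronglyMeasurable.restrict.mul hwm) ?_
    rw [ae_restrict_iff' measurableSet_Ioc]
    filter_upwards with τ hτ
    have hτ' : τ ∈ Icc (0:ℝ) x := Ioc_subset_Icc_self hτ
    rw [norm_mul, Real.norm_eq_abs, Real.norm_eq_abs, abs_of_nonneg (hKnn τ hτ')]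
    calc K τ * |w τ| ≤ K τ * C' := by
          exact mul_le_mul_of_nonneg_left (hwabs τ hτ') (hKnn τ hτ')
      _ = C' * K τ := mul_comm _ _
  have hKwii : IntervalIntegrable (fun τ => K τ * w τ) volume 0 x := by
    rwa [intervalIntegrable_iff, uIoc_of_le hx.le]
  have hup : ∫ τ in (0:ℝ)..x, K τ * w τ ≤ C * ∫ τ in (0:ℝ)..x, K τ := by
    rw [← intervalIntegral.integral_const_mul]
    exact intervalIntegral.integral_mono_on hx.le hKwii (hKii.const_mul C)
      (fun τ hτ => by
        rw [mul_comm C (K τ)]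
        exact mul_le_mul_of_nonneg_left (hbw τ hτ.1).2 (hKnn τ hτ))
  have hlo : c * ∫ τ in (0:ℝ)..x, K τ ≤ ∫ τ in (0:ℝ)..x, K τ * w τ := by
    rw [← intervalIntegral.integral_const_mul]
    exact intervalIntegral.integral_mono_on hx.le (hKii.const_mul c) hKwii
      (fun τ hτ => by
        rw [mul_comm c (K τ)]
        exact mul_le_mul_of_nonneg_left (hbw τ hτ.1).1 (hKnn τ hτ))
  have hc0 : (0:ℝ) < ρ ^ (1-β) * x ^ k / Gamma α :=
    div_pos (mul_pos (rpow_pos_of_pos hρ _) (rpow_pos_of_pos hx _)) (Gamma_pos_of_pos hα)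
  have hΛ : ρ ^ (1-β) * x ^ k / Gamma α * ∫ τ in (0:ℝ)..x, K τ = katLambda ρ β η k x α := by
    rw [hKval, katLambda]
    have e1 : x ^ (k + ρ*(η+α)) = x ^ k * x ^ (ρ*(η+α)) := Real.rpow_add hx _ _
    have e2 : ρ ^ (1-β) = ρ * ρ ^ (-β) := by
      rw [show (1-β) = 1 + (-β) from by ring, Real.rpow_add hρ, rpow_one]
    have hGα : Gamma α ≠ 0 := (Gamma_pos_of_pos hα).ne'
    have hGs : Gamma (η + α + 1) ≠ 0 := (Gamma_pos_of_pos (by linarith)).ne'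
    rw [e1, e2]
    field_simp
  have hJ : katJ ρ α β η k x w
      = ρ ^ (1-β) * x ^ k / Gamma α * ∫ τ in (0:ℝ)..x, K τ * w τ := rfl
  constructor
  · rw [hJ, ← hΛ]
    calc c * (ρ ^ (1-β) * x ^ k / Gamma α * ∫ τ in (0:ℝ)..x, K τ)
        = ρ ^ (1-β) * x ^ k / Gamma α * (c * ∫ τ in (0:ℝ)..x, K τ) := by ring
      _ ≤ ρ ^ (1-β) * x ^ k / Gamma α * ∫ τ in (0:ℝ)..x, K τ * w τ :=
          mul_le_mul_of_nonneg_left hlo hc0.le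
  · rw [hJ, ← hΛ]
    calc ρ ^ (1-β) * x ^ k / Gamma α * ∫ τ in (0:ℝ)..x, K τ * w τ
        ≤ ρ ^ (1-β) * x ^ k / Gamma α * (C * ∫ τ in (0:ℝ)..x, K τ) :=
          mul_le_mul_of_nonneg_left hup hc0.le
      _ = C * (ρ ^ (1-β) * x ^ k / Gamma α * ∫ τ in (0:ℝ)..x, K τ) := by ring

theorem stmt11 (v u : ℝ → ℝ) (m M n N : ℝ)
    (hv : IntegrableOn v (Ici (0:ℝ)))
    (hu : IntegrableOn u (Ici (0:ℝ)))
    (hbv : ∀ t ∈ Ici (0:ℝ), m ≤ v t ∧ v t ≤ M)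
    (hbu : ∀ t ∈ Ici (0:ℝ), n ≤ u t ∧ u t ≤ N)
    (x α δ ρ β lam η k : ℝ)
    (hx : 0 < x) (hα : 0 < α) (hδ : 0 < δ) (hρ : 0 < ρ) (hη : -1 < η) :
    M * katLambda ρ β η k x α * katJ ρ δ lam η k x u +
      n * katLambda ρ lam η k x δ * katJ ρ α β η k x v ≥
    n * M * katLambda ρ lam η k x δ * katLambda ρ β η k x α +
      katJ ρ δ lam η k x u * katJ ρ α β η k x v := by
  have h1 : katJ ρ α β η k x v ≤ M * katLambda ρ β η k x α :=
    (katJ_bounds hv hbv x α ρ β η k hx hα hρ hη).2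
  have h2 : n * katLambda ρ lam η k x δ ≤ katJ ρ δ lam η k x u :=
    (katJ_bounds hu hbu x δ ρ lam η k hx hδ hρ hη).1
  nlinarith [mul_nonneg (sub_nonneg.2 h1) (sub_nonneg.2 h2)]
end

section
/- Let v, u be integrable functions on [0,∞) and suppose there exist constants m, M, n, N ∈ ℝ satisfying m ≤ v(x) ≤ M and n ≤ u(x) ≤ N for all x ∈ [0,∞). Then for all x > 0, α > 0, δ > 0, ρ > 0 and β, λ, η, k ∈ ℝ with η > −1, one has m · Λ_{x,k}^{ρ,λ}(δ,η) · ρJ_{η,k}^{α,β} u(x) + N · Λ_{x,k}^{ρ,β}(α,η) · ρJ_{η,k}^{δ,λ} v(x) ≥ m·N · Λ_{x,k}^{ρ,λ}(δ,η) · Λ_{x,k}^{ρ,β}(α,η) + ρJ_{η,k}^{δ,λ} v(x) · ρJ_{η,k}^{α,β} u(x). -/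
open MeasureTheory Real Set

/-!
Since `m ≤ v` and `u ≤ N`, the factors `J v - m Λ_δ` and `N Λ_α - J u` are nonnegative, and their
product is the difference of the two sides. Both bounds come from the monotonicity of `J` in
the integrand together with `J c = c Λ` for constants `c`; the latter is a Beta integral after
the substitution `t = (τ / x) ^ ρ`.
-/

lemma ofReal_rpow_mul_one_sub_rpow {a b t : ℝ} (ht : t ∈ Icc (0:ℝ) 1) :
    ((t ^ (a - 1) * (1 - t) ^ (b - 1) : ℝ) : ℂ) =
      (t : ℂ) ^ ((a : ℂ) - 1) * (1 - (t : ℂ)) ^ ((b : ℂ) - 1) := by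
  push_cast [Complex.ofReal_mul, Complex.ofReal_cpow ht.1, Complex.ofReal_cpow (sub_nonneg.2 ht.2)]
  rfl

lemma integrableOn_rpow_mul_one_sub_rpow {a b : ℝ} (ha : 0 < a) (hb : 0 < b) :
    IntegrableOn (fun t => t ^ (a - 1) * (1 - t) ^ (b - 1)) (Ioo (0:ℝ) 1) := by
  have h := (intervalIntegrable_iff_integrableOn_Ioo_of_le zero_le_one).mp
    (Complex.betaIntegral_convergent (u := a) (v := b) (by simpa) (by simpa))
  have h' := h.congr_fun
    (fun t ht => (ofReal_rpow_mul_one_sub_rpow (Ioo_subset_Icc_self ht)).symm) measurableSet_Ioo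
  simpa [IntegrableOn] using h'.re

lemma integral_rpow_mul_one_sub_rpow {a b : ℝ} (ha : 0 < a) (hb : 0 < b) :
    ∫ t in Ioo (0:ℝ) 1, t ^ (a - 1) * (1 - t) ^ (b - 1) = ProbabilityTheory.beta a b := by
  rw [ProbabilityTheory.beta_eq_betaIntegralReal a b ha hb, Complex.betaIntegral,
    intervalIntegral.integral_of_le zero_le_one, integral_Ioc_eq_integral_Ioo,
    setIntegral_congr_fun measurableSet_Ioo fun t ht =>
      (ofReal_rpow_mul_one_sub_rpow (a := a) (b := b) (Ioo_subset_Icc_self ht)).symm,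
    integral_complex_ofReal, Complex.ofReal_re]

section
variable {E : Type*} [NormedAddCommGroup E] [NormedSpace ℝ E] {x ρ : ℝ}

lemma image_div_rpow_Ioo (hx : 0 < x) (hρ : 0 < ρ) :
    (fun τ => (τ / x) ^ ρ) '' Ioo 0 x = Ioo 0 1 := by
  ext t
  constructor
  · rintro ⟨τ, ⟨hτ0, hτx⟩, rfl⟩
    exact ⟨by positivity, rpow_lt_one (by positivity) ((div_lt_one hx).2 hτx) hρ⟩
  · rintro ⟨ht0, ht1⟩
    refine ⟨x * t ^ ρ⁻¹, ⟨by positivity, ?_⟩, ?_⟩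
    · simpa using mul_lt_mul_of_pos_left (rpow_lt_one ht0.le ht1 (inv_pos.2 hρ)) hx
    · simp [hx.ne', ← rpow_mul ht0.le, hρ.ne']

lemma injOn_div_rpow_Ioo (hx : 0 < x) (hρ : 0 < ρ) :
    InjOn (fun τ => (τ / x) ^ ρ) (Ioo 0 x) := by
  intro τ hτ σ hσ h
  have := rpow_left_injOn hρ.ne' (div_nonneg hτ.1.le hx.le) (div_nonneg hσ.1.le hx.le) h
  exact (div_left_inj' hx.ne').1 this

lemma hasDerivAt_div_rpow {τ : ℝ} (hx : x ≠ 0) (hτ : τ ≠ 0) :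
    HasDerivAt (fun τ => (τ / x) ^ ρ) (ρ / x * (τ / x) ^ (ρ - 1)) τ := by
  convert ((hasDerivAt_id' τ).div_const x).rpow_const (p := ρ) (Or.inl (div_ne_zero hτ hx))
    using 1
  ring

theorem integral_comp_div_rpow_Ioo (hx : 0 < x) (hρ : 0 < ρ) (g : ℝ → E) :
    ∫ τ in Ioo 0 x, (ρ / x * (τ / x) ^ (ρ - 1)) • g ((τ / x) ^ ρ) = ∫ t in Ioo 0 1, g t := by
  rw [← image_div_rpow_Ioo hx hρ, integral_image_eq_integral_abs_deriv_smul measurableSet_Ioo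
    (fun τ hτ => (hasDerivAt_div_rpow hx.ne' hτ.1.ne').hasDerivWithinAt)
    (injOn_div_rpow_Ioo hx hρ)]
  refine setIntegral_congr_fun measurableSet_Ioo fun τ hτ => ?_
  rw [abs_of_nonneg (by have := hτ.1; positivity)]

theorem integrableOn_comp_div_rpow_Ioo (hx : 0 < x) (hρ : 0 < ρ) (g : ℝ → E) :
    IntegrableOn (fun τ => (ρ / x * (τ / x) ^ (ρ - 1)) • g ((τ / x) ^ ρ)) (Ioo 0 x) ↔
      IntegrableOn g (Ioo 0 1) := by
  rw [← image_div_rpow_Ioo hx hρ, integrableOn_image_iff_integrableOn_abs_deriv_smul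
    measurableSet_Ioo (fun τ hτ => (hasDerivAt_div_rpow hx.ne' hτ.1.ne').hasDerivWithinAt)
    (injOn_div_rpow_Ioo hx hρ)]
  refine integrableOn_congr_fun (fun τ hτ => ?_) measurableSet_Ioo
  rw [abs_of_nonneg (by have := hτ.1; positivity)]

end

noncomputable def katKernel (ρ a b x τ : ℝ) : ℝ :=
  τ ^ (ρ * a - 1) * (x ^ ρ - τ ^ ρ) ^ (b - 1)

lemma katKernel_eq {ρ a b x τ : ℝ} (hρ : 0 < ρ) (hτ : τ ∈ Ioo 0 x) :
    katKernel ρ a b x τ = x ^ (ρ * (a + b - 1)) / ρ *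
      (ρ / x * (τ / x) ^ (ρ - 1)) • (((τ / x) ^ ρ) ^ (a - 1) * (1 - (τ / x) ^ ρ) ^ (b - 1)) := by
  have hx : 0 < x := hτ.1.trans hτ.2
  obtain ⟨s, hs0, hs1, rfl⟩ : ∃ s, 0 < s ∧ s < 1 ∧ τ = x * s :=
    ⟨τ / x, div_pos hτ.1 hx, (div_lt_one hx).2 hτ.2, by field_simp⟩
  have hsρ : s ^ ρ < 1 := rpow_lt_one hs0.le hs1 hρ
  have hdiff : x ^ ρ - (x * s) ^ ρ = x ^ ρ * (1 - s ^ ρ) := by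
    rw [mul_rpow hx.le hs0.le]; ring
  rw [katKernel, mul_div_cancel_left₀ s hx.ne', hdiff, mul_rpow hx.le hs0.le,
    mul_rpow (by positivity) (by linarith), ← rpow_mul hs0.le, ← rpow_mul hx.le]
  have hxpow : x ^ (ρ * (a + b - 1)) = x ^ (ρ * a - 1) * x ^ (ρ * (b - 1)) * x := by
    rw [← rpow_add hx, ← rpow_add_one hx.ne']; ring_nf
  have hspow : s ^ (ρ * a - 1) = s ^ (ρ - 1) * s ^ (ρ * (a - 1)) := by
    rw [← rpow_add hs0]; ring_nf
  rw [hxpow, hspow, smul_eq_mul]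
  field_simp

lemma katKernel_nonneg {ρ a b x τ : ℝ} (hρ : 0 ≤ ρ) (hτ : 0 ≤ τ) (hτx : τ ≤ x) :
    0 ≤ katKernel ρ a b x τ :=
  mul_nonneg (rpow_nonneg hτ _) (rpow_nonneg (sub_nonneg.2 (rpow_le_rpow hτ hτx hρ)) _)

section
variable {ρ a b x : ℝ} (hx : 0 < x) (hρ : 0 < ρ) (ha : 0 < a) (hb : 0 < b)
include hx hρ ha hb

lemma integrableOn_katKernel : IntegrableOn (katKernel ρ a b x) (Ioo 0 x) := by
  have h := (integrableOn_comp_div_rpow_Ioo hx hρ _).2 (integrableOn_rpow_mul_one_sub_rpow ha hb)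
  exact IntegrableOn.congr_fun (h.const_mul (x ^ (ρ * (a + b - 1)) / ρ))
    (fun τ hτ => (katKernel_eq hρ hτ).symm) measurableSet_Ioo

lemma integral_katKernel :
    ∫ τ in Ioo 0 x, katKernel ρ a b x τ =
      x ^ (ρ * (a + b - 1)) / ρ * ProbabilityTheory.beta a b := by
  rw [setIntegral_congr_fun measurableSet_Ioo fun τ hτ => katKernel_eq hρ hτ, integral_const_mul,
    ← integral_rpow_mul_one_sub_rpow ha hb]
  exact congrArg _ (integral_comp_div_rpow_Ioo hx hρ fun t => t ^ (a - 1) * (1 - t) ^ (b - 1))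

lemma intervalIntegrable_katKernel_mul {v : ℝ → ℝ} {C : ℝ}
    (hv : AEStronglyMeasurable v (volume.restrict (Ioo 0 x)))
    (hC : ∀ τ ∈ Ioo 0 x, ‖v τ‖ ≤ C) :
    IntervalIntegrable (fun τ => katKernel ρ a b x τ * v τ) volume 0 x := by
  rw [intervalIntegrable_iff_integrableOn_Ioo_of_le hx.le]
  exact (integrableOn_katKernel hx hρ ha hb).mul_bdd hv
    ((ae_restrict_iff' measurableSet_Ioo).2 (.of_forall hC))

end

lemma katJ_eq_integral_katKernel (ρ α β η k x : ℝ) (v : ℝ → ℝ) :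
    katJ ρ α β η k x v = ρ ^ (1 - β) * x ^ k / Gamma α *
      ∫ τ in (0:ℝ)..x, katKernel ρ (η + 1) α x τ * v τ := rfl

section
variable {ρ α β η k x : ℝ}

lemma katJ_const (hx : 0 < x) (hρ : 0 < ρ) (hα : 0 < α) (hη : -1 < η) (c : ℝ) :
    katJ ρ α β η k x (fun _ => c) = c * katLambda ρ β η k x α := by
  rw [katJ_eq_integral_katKernel, intervalIntegral.integral_mul_const,
    intervalIntegral.integral_of_le hx.le, integral_Ioc_eq_integral_Ioo,
    integral_katKernel hx hρ (by linarith) hα, katLambda, ProbabilityTheory.beta,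
    show ρ * (η + 1 + α - 1) = ρ * (η + α) by ring, add_right_comm η 1 α,
    show 1 - β = 1 + -β by ring, rpow_add hρ, rpow_one, rpow_add hx]
  have := (Gamma_pos_of_pos hα).ne'
  field_simp

lemma katJ_mono (hx : 0 ≤ x) (hρ : 0 ≤ ρ) (hα : 0 ≤ α) {v w : ℝ → ℝ}
    (hv : IntervalIntegrable (fun τ => katKernel ρ (η + 1) α x τ * v τ) volume 0 x)
    (hw : IntervalIntegrable (fun τ => katKernel ρ (η + 1) α x τ * w τ) volume 0 x)
    (hvw : ∀ τ ∈ Ioo 0 x, v τ ≤ w τ) :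
    katJ ρ α β η k x v ≤ katJ ρ α β η k x w := by
  have := Gamma_nonneg_of_nonneg hα
  refine mul_le_mul_of_nonneg_left
    (intervalIntegral.integral_mono_on_of_le_Ioo hx hv hw fun τ hτ => ?_) (by positivity)
  exact mul_le_mul_of_nonneg_left (hvw τ hτ) (katKernel_nonneg hρ hτ.1.le hτ.2.le)

lemma katJ_mem_Icc (hx : 0 < x) (hρ : 0 < ρ) (hα : 0 < α) (hη : -1 < η) {v : ℝ → ℝ}
    {c C : ℝ} (hv : AEStronglyMeasurable v (volume.restrict (Ioo 0 x)))
    (hvc : ∀ τ ∈ Ioo 0 x, v τ ∈ Icc c C) :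
    katJ ρ α β η k x v ∈ Icc (c * katLambda ρ β η k x α) (C * katLambda ρ β η k x α) := by
  have hη' : 0 < η + 1 := by linarith
  have hKc (c' : ℝ) :
      IntervalIntegrable (fun τ => katKernel ρ (η + 1) α x τ * c') volume 0 x :=
    intervalIntegrable_katKernel_mul hx hρ hη' hα aestronglyMeasurable_const fun _ _ => le_rfl
  have hKv := intervalIntegrable_katKernel_mul hx hρ hη' hα hv
    fun τ hτ => abs_le_max_abs_abs (hvc τ hτ).1 (hvc τ hτ).2
  rw [← katJ_const hx hρ hα hη, ← katJ_const hx hρ hα hη]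
  exact ⟨katJ_mono hx.le hρ.le hα.le (hKc c) hKv fun τ hτ => (hvc τ hτ).1,
    katJ_mono hx.le hρ.le hα.le hKv (hKc C) fun τ hτ => (hvc τ hτ).2⟩

end

theorem stmt12 (v u : ℝ → ℝ) (m M n N : ℝ)
    (hv : IntegrableOn v (Ici (0:ℝ)))
    (hu : IntegrableOn u (Ici (0:ℝ)))
    (hbv : ∀ t ∈ Ici (0:ℝ), m ≤ v t ∧ v t ≤ M)
    (hbu : ∀ t ∈ Ici (0:ℝ), n ≤ u t ∧ u t ≤ N)
    (x α δ ρ β lam η k : ℝ)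
    (hx : 0 < x) (hα : 0 < α) (hδ : 0 < δ) (hρ : 0 < ρ) (hη : -1 < η) :
    m * katLambda ρ lam η k x δ * katJ ρ α β η k x u +
      N * katLambda ρ β η k x α * katJ ρ δ lam η k x v ≥
    m * N * katLambda ρ lam η k x δ * katLambda ρ β η k x α +
      katJ ρ δ lam η k x v * katJ ρ α β η k x u := by
  have hIoo : Ioo 0 x ⊆ Ici (0:ℝ) := Ioo_subset_Ioi_self.trans Ioi_subset_Ici_self
  have hJv := katJ_mem_Icc (β := lam) (k := k) hx hρ hδ hη
    (hv.mono_set hIoo).aestronglyMeasurable fun τ hτ => hbv τ (hIoo hτ)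
  have hJu := katJ_mem_Icc (β := β) (k := k) hx hρ hα hη
    (hu.mono_set hIoo).aestronglyMeasurable fun τ hτ => hbu τ (hIoo hτ)
  nlinarith [mul_nonneg (sub_nonneg.2 hJv.1) (sub_nonneg.2 hJu.2)]
end

section
/- Let v, u be integrable functions on [0,∞) and suppose there exist constants m, M, n, N ∈ ℝ satisfying m ≤ v(x) ≤ M and n ≤ u(x) ≤ N for all x ∈ [0,∞). Then for all x > 0, α > 0, δ > 0, ρ > 0 and β, λ, η, k ∈ ℝ with η > −1, one has m·n · Λ_{x,k}^{ρ,β}(α,η) · Λ_{x,k}^{ρ,λ}(δ,η) + ρJ_{η,k}^{α,β} v(x) · ρJ_{η,k}^{δ,λ} u(x) ≥ m · Λ_{x,k}^{ρ,β}(α,η) · ρJ_{η,k}^{δ,λ} u(x) + n · Λ_{x,k}^{ρ,λ}(δ,η) · ρJ_{η,k}^{α,β} v(x). -/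
open MeasureTheory Real Set

/-- Real Beta integrand is integrable on `Ioo 0 1`. -/
lemma betaInt {a b : ℝ} (ha : 0 < a) (hb : 0 < b) :
    IntegrableOn (fun t : ℝ => t ^ (a - 1) * (1 - t) ^ (b - 1)) (Ioo 0 1) := by
  have h := Complex.betaIntegral_convergent (u := (a : ℂ)) (v := (b : ℂ))
    (by simpa using ha) (by simpa using hb)
  rw [intervalIntegrable_iff_integrableOn_Ioo_of_le zero_le_one] at h
  have h2 : IntegrableOn (fun t : ℝ => ‖(t:ℂ) ^ ((a:ℂ) - 1) * (1 - (t:ℂ)) ^ ((b:ℂ) - 1)‖)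
      (Ioo 0 1) := h.norm
  refine h2.congr_fun (fun t ht => ?_) measurableSet_Ioo
  obtain ⟨ht0, ht1⟩ := ht
  have h1 : (1 : ℂ) - (t : ℂ) = ((1 - t : ℝ) : ℂ) := by push_cast; ring
  simp only [norm_mul]
  rw [Complex.norm_cpow_eq_rpow_re_of_pos ht0, h1,
    Complex.norm_cpow_eq_rpow_re_of_pos (by linarith : (0:ℝ) < 1 - t)]
  simp

/-- Real Beta integral value. -/
lemma betaVal {a b : ℝ} (ha : 0 < a) (hb : 0 < b) :
    ∫ t in Ioo (0:ℝ) 1, t ^ (a - 1) * (1 - t) ^ (b - 1) =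
      Real.Gamma a * Real.Gamma b / Real.Gamma (a + b) := by
  have h := Complex.Gamma_mul_Gamma_eq_betaIntegral (s := (a : ℂ)) (t := (b : ℂ))
    (by simpa using ha) (by simpa using hb)
  have hbeta : Complex.betaIntegral a b =
      ((∫ t in Ioo (0:ℝ) 1, t ^ (a - 1) * (1 - t) ^ (b - 1) : ℝ) : ℂ) := by
    rw [Complex.betaIntegral, intervalIntegral.integral_of_le zero_le_one,
      integral_Ioc_eq_integral_Ioo]
    calc ∫ t in Ioo (0:ℝ) 1, (t:ℂ) ^ ((a:ℂ) - 1) * (1 - (t:ℂ)) ^ ((b:ℂ) - 1)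
        = ∫ t in Ioo (0:ℝ) 1, ((t ^ (a - 1) * (1 - t) ^ (b - 1) : ℝ) : ℂ) := by
          refine setIntegral_congr_fun measurableSet_Ioo (fun t ht => ?_)
          obtain ⟨ht0, ht1⟩ := ht
          rw [Complex.ofReal_mul, Complex.ofReal_cpow ht0.le,
            Complex.ofReal_cpow (by linarith : (0:ℝ) ≤ 1 - t)]
          push_cast
          ring
      _ = _ := integral_ofReal
  rw [hbeta, ← Complex.ofReal_add, Complex.Gamma_ofReal, Complex.Gamma_ofReal,
    Complex.Gamma_ofReal, ← Complex.ofReal_mul, ← Complex.ofReal_mul] at h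
  have h' := Complex.ofReal_inj.mp h
  have hne : Real.Gamma (a + b) ≠ 0 := (Real.Gamma_pos_of_pos (by linarith)).ne'
  field_simp
  linarith [h']

lemma katJ_ge (w : ℝ → ℝ) (hw : IntegrableOn w (Ici (0:ℝ))) (c C : ℝ)
    (hb : ∀ t ∈ Ici (0:ℝ), c ≤ w t ∧ w t ≤ C)
    (x α ρ β η k : ℝ) (hx : 0 < x) (hα : 0 < α) (hρ : 0 < ρ) (hη : -1 < η) :
    c * katLambda ρ β η k x α ≤ katJ ρ α β η k x w := by
  set f : ℝ → ℝ := fun t => x * t ^ ρ⁻¹ with hf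
  set f' : ℝ → ℝ := fun t => x * (ρ⁻¹ * t ^ (ρ⁻¹ - 1)) with hf'
  have hderiv : ∀ t ∈ Ioo (0:ℝ) 1, HasDerivWithinAt f (f' t) (Ioo 0 1) t := fun t ht =>
    ((Real.hasDerivAt_rpow_const (Or.inl ht.1.ne')).const_mul x).hasDerivWithinAt
  have hinj : InjOn f (Ioo 0 1) := by
    intro s hs t ht hst
    have h1 : s ^ ρ⁻¹ = t ^ ρ⁻¹ := mul_left_cancel₀ hx.ne' hst
    have h2 := congrArg (fun z : ℝ => z ^ ρ) h1
    simpa [← Real.rpow_mul hs.1.le, ← Real.rpow_mul ht.1.le,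
      inv_mul_cancel₀ hρ.ne'] using h2
  have himg : f '' Ioo 0 1 = Ioo 0 x := by
    ext τ
    constructor
    · rintro ⟨t, ⟨ht0, ht1⟩, rfl⟩
      refine ⟨by simp only [hf]; positivity, ?_⟩
      have h1 : t ^ ρ⁻¹ < 1 := Real.rpow_lt_one ht0.le ht1 (by positivity)
      have h2 : 0 < t ^ ρ⁻¹ := Real.rpow_pos_of_pos ht0 _
      simp only [hf]
      nlinarith
    · rintro ⟨hτ0, hτx⟩
      refine ⟨(τ / x) ^ ρ, ⟨by positivity, ?_⟩, ?_⟩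
      · exact Real.rpow_lt_one (by positivity) (by rw [div_lt_one hx]; exact hτx) hρ
      · have hd : (0:ℝ) ≤ τ / x := by positivity
        simp only [hf, ← Real.rpow_mul hd, mul_inv_cancel₀ hρ.ne', Real.rpow_one]
        field_simp
  have ptwise : ∀ (y : ℝ), ∀ t ∈ Ioo (0:ℝ) 1,
      |f' t| * ((f t) ^ (ρ * (η + 1) - 1) * (x ^ ρ - (f t) ^ ρ) ^ (α - 1) * y) =
      x ^ (ρ * (η + α)) / ρ * (t ^ ((η + 1) - 1) * (1 - t) ^ (α - 1)) * y := by
    intro y t ht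
    obtain ⟨ht0, ht1⟩ := ht
    have htρ : (t ^ ρ⁻¹) ^ ρ = t := by
      rw [← Real.rpow_mul ht0.le, inv_mul_cancel₀ hρ.ne', Real.rpow_one]
    have h2 : (f t) ^ (ρ * (η + 1) - 1) =
        x ^ (ρ * (η + 1) - 1) * t ^ (ρ⁻¹ * (ρ * (η + 1) - 1)) := by
      simp only [hf]
      rw [Real.mul_rpow hx.le (Real.rpow_nonneg ht0.le _), ← Real.rpow_mul ht0.le]
    have h3 : x ^ ρ - (f t) ^ ρ = x ^ ρ * (1 - t) := by
      simp only [hf]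
      rw [Real.mul_rpow hx.le (Real.rpow_nonneg ht0.le _), htρ]
      ring
    have h4 : (x ^ ρ * (1 - t)) ^ (α - 1) = x ^ (ρ * (α - 1)) * (1 - t) ^ (α - 1) := by
      rw [Real.mul_rpow (by positivity) (by linarith), ← Real.rpow_mul hx.le]
    have habs : |f' t| = x * ρ⁻¹ * t ^ (ρ⁻¹ - 1) := by
      simp only [hf']
      rw [abs_of_nonneg (by positivity)]
      ring
    have hxs : x ^ (ρ * (η + α)) =
        x * (x ^ (ρ * (η + 1) - 1) * x ^ (ρ * (α - 1))) := by
      rw [show ρ * (η + α) = 1 + ((ρ * (η + 1) - 1) + (ρ * (α - 1))) by ring,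
        Real.rpow_add hx, Real.rpow_one, Real.rpow_add hx]
    have hts : t ^ (ρ⁻¹ - 1) * t ^ (ρ⁻¹ * (ρ * (η + 1) - 1)) = t ^ ((η + 1) - 1) := by
      rw [← Real.rpow_add ht0]
      congr 1
      field_simp
      ring
    rw [h2, h3, h4, habs, hxs, ← hts]
    field_simp
  have hchg : ∀ (F : ℝ → ℝ),
      (∫ τ in Ioo 0 x, τ ^ (ρ * (η + 1) - 1) * (x ^ ρ - τ ^ ρ) ^ (α - 1) * F τ) =
      ∫ t in Ioo (0:ℝ) 1, |f' t| •
        ((f t) ^ (ρ * (η + 1) - 1) * (x ^ ρ - (f t) ^ ρ) ^ (α - 1) * F (f t)) := by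
    intro F
    rw [← himg]
    exact integral_image_eq_integral_abs_deriv_smul measurableSet_Ioo hderiv hinj _
  have hiff : ∀ (G : ℝ → ℝ), IntegrableOn G (Ioo 0 x) ↔
      IntegrableOn (fun t => |f' t| • G (f t)) (Ioo 0 1) := by
    intro G
    rw [← himg]
    exact integrableOn_image_iff_integrableOn_abs_deriv_smul measurableSet_Ioo hderiv hinj G
  set K : ℝ → ℝ := fun τ => τ ^ (ρ * (η + 1) - 1) * (x ^ ρ - τ ^ ρ) ^ (α - 1) with hK
  have hbetaInt := betaInt (a := η + 1) (b := α) (by linarith) hα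
  have hKint : IntegrableOn K (Ioo 0 x) := by
    rw [hiff K]
    have hb1 : IntegrableOn
        (fun t : ℝ => x ^ (ρ * (η + α)) / ρ * (t ^ ((η + 1) - 1) * (1 - t) ^ (α - 1)))
        (Ioo 0 1) := hbetaInt.const_mul _
    refine hb1.congr_fun (fun t ht => ?_) measurableSet_Ioo
    have h1 := ptwise 1 t ht
    simp only [mul_one] at h1
    simp only [smul_eq_mul, hK]
    exact h1.symm
  have hKnonneg : ∀ τ ∈ Ioo (0:ℝ) x, 0 ≤ K τ := by
    intro τ hτ
    have h1 := Real.rpow_lt_rpow hτ.1.le hτ.2 hρ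
    exact mul_nonneg (Real.rpow_nonneg hτ.1.le _) (Real.rpow_nonneg (by linarith) _)
  have hKcont : ContinuousOn K (Ioo 0 x) := by
    apply ContinuousOn.mul
    · exact continuousOn_id.rpow_const (fun τ hτ => Or.inl hτ.1.ne')
    · refine (continuousOn_const.sub
        (continuousOn_id.rpow_const (fun τ hτ => Or.inl hτ.1.ne'))).rpow_const
        (fun τ hτ => Or.inl ?_)
      have h1 := Real.rpow_lt_rpow hτ.1.le hτ.2 hρ
      simp only [id]
      intro hc
      have := sub_eq_zero.mp hc
      simp only [id] at this
      linarith [this]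
  have hwm : AEStronglyMeasurable w (volume.restrict (Ioo 0 x)) :=
    (hw.mono_set (fun τ hτ => hτ.1.le)).aestronglyMeasurable
  have hFint : IntegrableOn (fun τ => K τ * w τ) (Ioo 0 x) := by
    refine Integrable.mono' (hKint.const_mul (|c| + |C|)) ?_ ?_
    · exact ((hKcont.aestronglyMeasurable measurableSet_Ioo).mul hwm)
    · filter_upwards [ae_restrict_mem measurableSet_Ioo] with τ hτ
      have hb' := hb τ hτ.1.le
      have habs : |w τ| ≤ |c| + |C| := by
        have h1 := abs_nonneg c
        have h2 := abs_nonneg C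
        have h3 := le_abs_self C
        have h4 := neg_abs_le c
        rw [abs_le]
        exact ⟨by linarith [hb'.1], by linarith [hb'.2]⟩
      have hKn := hKnonneg τ hτ
      rw [Real.norm_eq_abs, abs_mul, abs_of_nonneg hKn]
      calc K τ * |w τ| ≤ K τ * (|c| + |C|) := by nlinarith
        _ = (|c| + |C|) * K τ := by ring
  have hKval : ∫ τ in Ioo 0 x, K τ =
      x ^ (ρ * (η + α)) / ρ *
        (Real.Gamma (η + 1) * Real.Gamma α / Real.Gamma (η + 1 + α)) := by
    have h1 := hchg (fun _ => (1:ℝ))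
    simp only [mul_one] at h1
    have h2 : (∫ t in Ioo (0:ℝ) 1, |f' t| •
          ((f t) ^ (ρ * (η + 1) - 1) * (x ^ ρ - (f t) ^ ρ) ^ (α - 1))) =
        ∫ t in Ioo (0:ℝ) 1,
          x ^ (ρ * (η + α)) / ρ * (t ^ ((η + 1) - 1) * (1 - t) ^ (α - 1)) := by
      refine setIntegral_congr_fun measurableSet_Ioo (fun t ht => ?_)
      have h3 := ptwise 1 t ht
      simp only [mul_one] at h3
      simpa [smul_eq_mul] using h3
    simp only [hK]
    rw [h1, h2, integral_const_mul, betaVal (by linarith : (0:ℝ) < η + 1) hα]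
  have hmono : (∫ τ in Ioo 0 x, K τ * c) ≤ ∫ τ in Ioo 0 x, K τ * w τ := by
    refine setIntegral_mono_on (hKint.mul_const c) hFint measurableSet_Ioo ?_
    intro τ hτ
    exact mul_le_mul_of_nonneg_left (hb τ hτ.1.le).1 (hKnonneg τ hτ)
  rw [integral_mul_const, hKval] at hmono
  have hGα : 0 < Real.Gamma α := Real.Gamma_pos_of_pos hα
  have hpre : 0 < ρ ^ (1 - β) * x ^ k / Real.Gamma α := by positivity
  have hJ : katJ ρ α β η k x w = ρ ^ (1 - β) * x ^ k / Real.Gamma α *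
      ∫ τ in Ioo 0 x, K τ * w τ := by
    rw [katJ, intervalIntegral.integral_of_le hx.le, integral_Ioc_eq_integral_Ioo]
  have hΛ : ρ ^ (1 - β) * x ^ k / Real.Gamma α *
      (x ^ (ρ * (η + α)) / ρ * (Real.Gamma (η + 1) * Real.Gamma α / Real.Gamma (η + 1 + α))) =
      katLambda ρ β η k x α := by
    rw [katLambda]
    have hρpow : ρ ^ ((1:ℝ) - β) = ρ * ρ ^ (-β) := by
      rw [show (1:ℝ) - β = 1 + -β by ring, Real.rpow_add hρ, Real.rpow_one]
    have hxpow : x ^ (k + ρ * (η + α)) = x ^ k * x ^ (ρ * (η + α)) := Real.rpow_add hx _ _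
    have hGsum : Real.Gamma (η + 1 + α) = Real.Gamma (η + α + 1) := by ring_nf
    have hGsumne : Real.Gamma (η + α + 1) ≠ 0 :=
      (Real.Gamma_pos_of_pos (by linarith)).ne'
    rw [hρpow, hxpow, hGsum]
    field_simp
  rw [hJ]
  calc c * katLambda ρ β η k x α = ρ ^ (1 - β) * x ^ k / Real.Gamma α *
        (x ^ (ρ * (η + α)) / ρ *
          (Real.Gamma (η + 1) * Real.Gamma α / Real.Gamma (η + 1 + α)) * c) := by
        rw [show ∀ a b : ℝ, a * (b * c) = c * (a * b) from fun a b => by ring, hΛ]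
    _ ≤ ρ ^ (1 - β) * x ^ k / Real.Gamma α * ∫ τ in Ioo 0 x, K τ * w τ :=
        mul_le_mul_of_nonneg_left hmono hpre.le

theorem stmt14 (v u : ℝ → ℝ) (m M n N : ℝ)
    (hv : IntegrableOn v (Ici (0:ℝ)))
    (hu : IntegrableOn u (Ici (0:ℝ)))
    (hbv : ∀ t ∈ Ici (0:ℝ), m ≤ v t ∧ v t ≤ M)
    (hbu : ∀ t ∈ Ici (0:ℝ), n ≤ u t ∧ u t ≤ N)
    (x α δ ρ β lam η k : ℝ)
    (hx : 0 < x) (hα : 0 < α) (hδ : 0 < δ) (hρ : 0 < ρ) (hη : -1 < η) :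
    m * n * katLambda ρ β η k x α * katLambda ρ lam η k x δ +
      katJ ρ α β η k x v * katJ ρ δ lam η k x u ≥
    m * katLambda ρ β η k x α * katJ ρ δ lam η k x u +
      n * katLambda ρ lam η k x δ * katJ ρ α β η k x v := by
  have hA := katJ_ge v hv m M hbv x α ρ β η k hx hα hρ hη
  have hB := katJ_ge u hu n N hbu x δ ρ lam η k hx hδ hρ hη
  nlinarith [mul_nonneg (sub_nonneg.2 hA) (sub_nonneg.2 hB)]
end
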